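/- arXiv:1307.3681 — 5 statements merged into one kernel-verified Lean document; each statement's English description precedes it below -/
import Mathlib

section
/- If t ≥ 2, then for every ρ ∈ Amoeba(f) there exists σ ∈ ArchTrop(f) with |ρ − σ| ≤ log(t−1); equivalently, every x ∈ (ℂ∖{0})^n with f(x) = 0 satisfies dist(Log|x|, ArchTrop(f)) ≤ log(t−1). -/
open Pointwise

/-- Evaluation of the Laurent polynomial `f(x) = ∑ i, c i * x^{a i}` at `x ∈ (ℂ∖{0})^n`. -/
noncomputable def lpoly {n : ℕ} {ι : Type*} [Fintype ι] (c : ι → ℂ) (a : ι → Fin n → ℤ)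
    (x : Fin n → ℂ) : ℂ :=
  ∑ i, c i * ∏ j, x j ^ a i j

/-- `Log|x| = (log|x_1|, …, log|x_n|)`. -/
noncomputable def LogAbs {n : ℕ} (x : Fin n → ℂ) : EuclideanSpace ℝ (Fin n) :=
  WithLp.toLp 2 (fun j => Real.log (‖x j‖))

/-- `Amoeba(f) = { Log|x| : x ∈ (ℂ∖{0})^n, f(x) = 0 }`. -/
noncomputable def Amoeba {n : ℕ} {ι : Type*} [Fintype ι] (c : ι → ℂ) (a : ι → Fin n → ℤ) :
    Set (EuclideanSpace ℝ (Fin n)) :=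
  {w | ∃ x : Fin n → ℂ, (∀ j, x j ≠ 0) ∧ lpoly c a x = 0 ∧ w = LogAbs x}

/-- `|c_i| e^{a_i · v}`, the `i`-th tropical term of `f` at `v`. -/
noncomputable def tropTerm {n : ℕ} {ι : Type*} (c : ι → ℂ) (a : ι → Fin n → ℤ)
    (v : EuclideanSpace ℝ (Fin n)) (i : ι) : ℝ :=
  ‖c i‖ * Real.exp (∑ j, (a i j : ℝ) * v j)

/-- `ArchTrop(f)`: the set of `v ∈ ℝ^n` where the maximum of `|c_i| e^{a_i·v}` is attained
at least twice. -/
noncomputable def ArchTrop {n : ℕ} {ι : Type*} (c : ι → ℂ) (a : ι → Fin n → ℤ) :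
    Set (EuclideanSpace ℝ (Fin n)) :=
  {v | ∃ i k : ι, i ≠ k ∧ (∀ l, tropTerm c a v l ≤ tropTerm c a v i) ∧
      tropTerm c a v i = tropTerm c a v k}

/-!
At a root `x`, the largest term `|c_i x^{a_i}|` is cancelled by the other `t - 1` terms, so it is
at most `t - 1` times some other term `|c_k x^{a_k}|`. Moving from `Log|x|` a distance `s` in the
direction of `a_k - a_i` multiplies the ratio of these two terms by `e^{-s |a_k - a_i|}`, so they
balance within distance `log(t-1) / |a_k - a_i| ≤ log(t-1)`. On that segment the intermediate
value theorem, applied to `max_{l ≠ i} |c_l| e^{a_l·v} - |c_i| e^{a_i·v}`, gives a point where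
the maximum is attained both by `i` and by another index.
-/

section

open scoped InnerProductSpace

variable {n : ℕ} {ι : Type*}

noncomputable def exponentVec (a : ι → Fin n → ℤ) (i : ι) : EuclideanSpace ℝ (Fin n) :=
  WithLp.toLp 2 fun j => (a i j : ℝ)

theorem tropTerm_eq_inner (c : ι → ℂ) (a : ι → Fin n → ℤ) (v : EuclideanSpace ℝ (Fin n))
    (i : ι) : tropTerm c a v i = ‖c i‖ * Real.exp ⟪exponentVec a i, v⟫_ℝ := by
  simp [tropTerm, exponentVec, PiLp.inner_apply, mul_comm]

theorem continuous_tropTerm (c : ι → ℂ) (a : ι → Fin n → ℤ) (i : ι) :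
    Continuous fun v => tropTerm c a v i := by
  simp only [tropTerm_eq_inner]
  fun_prop

theorem tropTerm_add_smul (c : ι → ℂ) (a : ι → Fin n → ℤ) (v d : EuclideanSpace ℝ (Fin n))
    (s : ℝ) (i : ι) :
    tropTerm c a (v + s • d) i = tropTerm c a v i * Real.exp (s * ⟪exponentVec a i, d⟫_ℝ) := by
  rw [tropTerm_eq_inner, tropTerm_eq_inner, inner_add_right, real_inner_smul_right,
    Real.exp_add, mul_assoc]

theorem tropTerm_pos {c : ι → ℂ} (a : ι → Fin n → ℤ) (v : EuclideanSpace ℝ (Fin n)) {i : ι}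
    (hc : c i ≠ 0) : 0 < tropTerm c a v i :=
  mul_pos (norm_pos_iff.2 hc) (Real.exp_pos _)

theorem tropTerm_logAbs (c : ι → ℂ) (a : ι → Fin n → ℤ) {x : Fin n → ℂ} (hx : ∀ j, x j ≠ 0)
    (i : ι) : tropTerm c a (LogAbs x) i = ‖c i * ∏ j, x j ^ a i j‖ := by
  rw [tropTerm, norm_mul, norm_prod, Real.exp_sum]
  congr 1
  refine Finset.prod_congr rfl fun j _ => ?_
  rw [norm_zpow, LogAbs, PiLp.toLp_apply, ← Real.rpow_intCast,
    Real.rpow_def_of_pos (norm_pos_iff.2 (hx j)), mul_comm]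

theorem one_le_norm_exponentVec_sub {a : ι → Fin n → ℤ} {i k : ι} (h : a i ≠ a k) :
    1 ≤ ‖exponentVec a i - exponentVec a k‖ := by
  obtain ⟨j, hj⟩ := Function.ne_iff.1 h
  have hj' : (1 : ℝ) ≤ |((a i j - a k j : ℤ) : ℝ)| := by
    exact_mod_cast Int.one_le_abs (sub_ne_zero.2 hj)
  calc (1 : ℝ) ≤ ‖(exponentVec a i - exponentVec a k) j‖ := by
        simpa [exponentVec] using hj'
    _ ≤ _ := PiLp.norm_apply_le _ j

theorem exists_tropTerm_eq_dist_le {c : ι → ℂ} {a : ι → Fin n → ℤ} {i k : ι} (hik : a i ≠ a k)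
    (hci : c i ≠ 0) (hck : c k ≠ 0) (v : EuclideanSpace ℝ (Fin n))
    (hle : tropTerm c a v k ≤ tropTerm c a v i) :
    ∃ w, tropTerm c a w i = tropTerm c a w k ∧
      dist v w ≤ Real.log (tropTerm c a v i / tropTerm c a v k) := by
  set d := exponentVec a k - exponentVec a i
  set g := Real.log (tropTerm c a v i / tropTerm c a v k)
  have hTk := tropTerm_pos a v hck
  have hd : 1 ≤ ‖d‖ := one_le_norm_exponentVec_sub (Ne.symm hik)
  have hg : 0 ≤ g := Real.log_nonneg ((one_le_div hTk).2 hle)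
  refine ⟨v + (g / ‖d‖ ^ 2) • d, ?_, ?_⟩
  · have hinner : ⟪exponentVec a k, d⟫_ℝ - ⟪exponentVec a i, d⟫_ℝ = ‖d‖ ^ 2 := by
      rw [← inner_sub_left, real_inner_self_eq_norm_sq]
    have hratio : tropTerm c a v i = tropTerm c a v k * Real.exp g := by
      rw [Real.exp_log (div_pos (tropTerm_pos a v hci) hTk), mul_div_cancel₀ _ hTk.ne']
    rw [tropTerm_add_smul, tropTerm_add_smul, hratio, mul_assoc, ← Real.exp_add]
    congr 2
    field_simp
    linear_combination (-g) * hinner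
  · calc dist v (v + (g / ‖d‖ ^ 2) • d) = g / ‖d‖ := by
          rw [dist_self_add_right, norm_smul, Real.norm_of_nonneg (by positivity)]
          field_simp
      _ ≤ g := div_le_self hg hd

theorem exists_mem_segment_mem_archTrop [Fintype ι] [DecidableEq ι] {c : ι → ℂ}
    {a : ι → Fin n → ℤ} {p q : EuclideanSpace ℝ (Fin n)} {i k : ι} (hki : k ≠ i)
    (hp : ∀ l, tropTerm c a p l ≤ tropTerm c a p i) (hq : tropTerm c a q i ≤ tropTerm c a q k) :
    ∃ σ ∈ segment ℝ p q, σ ∈ ArchTrop c a := by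
  have hk : k ∈ Finset.univ.erase i := Finset.mem_erase.2 ⟨hki, Finset.mem_univ k⟩
  set others := fun v => (Finset.univ.erase i).sup' ⟨k, hk⟩ (tropTerm c a v)
  have hcont : Continuous fun v => others v - tropTerm c a v i :=
    (Continuous.finset_sup'_apply _ fun l _ => continuous_tropTerm c a l).sub
      (continuous_tropTerm c a i)
  have hp' : others p - tropTerm c a p i ≤ 0 :=
    sub_nonpos.2 (Finset.sup'_le _ _ fun l _ => hp l)
  have hq' : 0 ≤ others q - tropTerm c a q i := sub_nonneg.2 (hq.trans (Finset.le_sup' _ hk))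
  obtain ⟨σ, hσ, hzero⟩ := (convex_segment p q).isPreconnected.intermediate_value
    (left_mem_segment ℝ p q) (right_mem_segment ℝ p q) hcont.continuousOn ⟨hp', hq'⟩
  have htie : others σ = tropTerm c a σ i := sub_eq_zero.1 hzero
  obtain ⟨l, hl, hσl⟩ := Finset.exists_mem_eq_sup' ⟨k, hk⟩ (tropTerm c a σ)
  refine ⟨σ, hσ, i, l, (Finset.ne_of_mem_erase hl).symm, fun m => ?_, htie.symm.trans hσl⟩
  rcases eq_or_ne m i with rfl | hm
  · exact le_rfl
  · exact htie ▸ Finset.le_sup' _ (Finset.mem_erase.2 ⟨hm, Finset.mem_univ m⟩)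

theorem exists_ne_norm_le_mul_of_sum_eq_zero {E : Type*} [SeminormedAddCommGroup E]
    [Fintype ι] [DecidableEq ι] {z : ι → E} (hz : ∑ l, z l = 0) (i : ι)
    (hcard : 1 < Fintype.card ι) :
    ∃ k ≠ i, ‖z i‖ ≤ ((Fintype.card ι : ℝ) - 1) * ‖z k‖ := by
  obtain ⟨k₀, hk₀⟩ := Fintype.exists_ne_of_one_lt_card hcard i
  have hne : (Finset.univ.erase i).Nonempty := ⟨k₀, Finset.mem_erase.2 ⟨hk₀, Finset.mem_univ _⟩⟩
  obtain ⟨k, hk, hmax⟩ := Finset.exists_max_image _ (fun l => ‖z l‖) hne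
  refine ⟨k, Finset.ne_of_mem_erase hk, ?_⟩
  have hzi : z i = -∑ l ∈ Finset.univ.erase i, z l := by
    rw [eq_neg_iff_add_eq_zero, Finset.add_sum_erase _ _ (Finset.mem_univ i), hz]
  calc ‖z i‖ ≤ ∑ l ∈ Finset.univ.erase i, ‖z l‖ := by
        rw [hzi, norm_neg]; exact norm_sum_le _ _
    _ ≤ (Finset.univ.erase i).card • ‖z k‖ := Finset.sum_le_card_nsmul _ _ _ hmax
    _ = ((Fintype.card ι : ℝ) - 1) * ‖z k‖ := by
        rw [Finset.card_erase_of_mem (Finset.mem_univ i), Finset.card_univ, nsmul_eq_mul,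
          Nat.cast_sub hcard.le, Nat.cast_one]

end

theorem stmt4_general {n t : ℕ} (ht : 2 ≤ t)
    (c : Fin t → ℂ) (a : Fin t → Fin n → ℤ)
    (ha : Function.Injective a) (hc : ∀ i, c i ≠ 0) :
    ∀ x : Fin n → ℂ, (∀ j, x j ≠ 0) → lpoly c a x = 0 →
      ∃ σ ∈ ArchTrop c a, dist (LogAbs x) σ ≤ Real.log ((t : ℝ) - 1) := by
  intro x hx hfx
  set ρ := LogAbs x
  have : Nonempty (Fin t) := ⟨⟨0, by omega⟩⟩
  obtain ⟨i, hi⟩ := Finite.exists_max (tropTerm c a ρ)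
  obtain ⟨k, hki, hgap⟩ := exists_ne_norm_le_mul_of_sum_eq_zero hfx i (by rw [Fintype.card_fin]; omega)
  simp only [Fintype.card_fin, ← tropTerm_logAbs c a hx] at hgap
  obtain ⟨w, hw, hρw⟩ := exists_tropTerm_eq_dist_le (ha.ne hki.symm) (hc i) (hc k) ρ (hi k)
  obtain ⟨σ, hσ, hσtrop⟩ := exists_mem_segment_mem_archTrop hki hi hw.le
  refine ⟨σ, hσtrop, ?_⟩
  have hTk := tropTerm_pos a ρ (hc k)
  calc dist ρ σ ≤ dist ρ w := by
        linarith [dist_add_dist_of_mem_segment hσ, dist_nonneg (x := σ) (y := w)]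
    _ ≤ Real.log (tropTerm c a ρ i / tropTerm c a ρ k) := hρw
    _ ≤ Real.log ((t : ℝ) - 1) :=
        Real.log_le_log (div_pos (tropTerm_pos a ρ (hc i)) hTk) ((div_le_iff₀ hTk).2 hgap)

/-- Every point of `Amoeba(f)` lies within Euclidean distance `log(t-1)` of some point
of `ArchTrop(f)`: every root `x ∈ (ℂ∖{0})^n` of `f` satisfies
`dist(Log|x|, ArchTrop(f)) ≤ log(t-1)`. -/
theorem stmt4 {n t : ℕ} (hn : 1 ≤ n) (ht : 2 ≤ t)
    (c : Fin t → ℂ) (a : Fin t → Fin n → ℤ)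
    (ha : Function.Injective a) (hc : ∀ i, c i ≠ 0) :
    ∀ x : Fin n → ℂ, (∀ j, x j ≠ 0) → lpoly c a x = 0 →
      ∃ σ ∈ ArchTrop c a, dist (LogAbs x) σ ≤ Real.log ((t : ℝ) - 1) :=
  stmt4_general ht c a ha hc
end

section
/- Assume t ≥ 2, a_1 = 0, a_t = d ≥ 1, |c_i| ≤ 1 for all i ∈ {1,…,t}, and |c_1| = |c_t| = 1. Then ArchTrop(f) = {0}, and f has a root ζ ∈ ℂ∖{0} with |log|ζ|| ≤ log((√5 + 1)/2) < 0.482; in particular, the point 0 ∈ ArchTrop(f) lies within distance log((√5+1)/2) of Amoeba(f). -/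
/-- Evaluation of the univariate polynomial `f(x) = ∑ i, c i * x^{a i}` (with integer
exponents) at `x ∈ ℂ∖{0}`. -/
noncomputable def upoly {t : ℕ} (c : Fin t → ℂ) (a : Fin t → ℤ) (x : ℂ) : ℂ :=
  ∑ i, c i * x ^ a i

/-- `|c_i| e^{a_i v}`, the `i`-th tropical term of `f` at `v ∈ ℝ`. -/
noncomputable def tropTerm1 {t : ℕ} (c : Fin t → ℂ) (a : Fin t → ℤ) (v : ℝ) (i : Fin t) : ℝ :=
  ‖c i‖ * Real.exp ((a i : ℝ) * v)

/-- `ArchTrop(f) ⊆ ℝ`: the set of `v` where the maximum of `|c_i| e^{a_i v}` is attained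
at least twice. -/
noncomputable def ArchTrop1 {t : ℕ} (c : Fin t → ℂ) (a : Fin t → ℤ) : Set ℝ :=
  {v | ∃ i k : Fin t, i ≠ k ∧ (∀ l, tropTerm1 c a v l ≤ tropTerm1 c a v i) ∧
      tropTerm1 c a v i = tropTerm1 c a v k}

/-!
At `v = 0` the two extreme terms have size `1` and dominate all others; for `v < 0` the constant
term, and for `v > 0` the top-degree term, is the unique maximum. Hence `ArchTrop(f) = {0}`.

Since `a₁ = 0`, `f` is a polynomial `p` of degree `d` whose coefficients have norm `≤ 1`, with
`‖p₀‖ = ‖p_d‖ = 1`. The norms of its roots then multiply to `1`, so the Mahler measure satisfies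
`M(p)² = ∏_ζ max(‖ζ‖, ‖ζ‖⁻¹)`. If no root lay in the annulus `φ⁻¹ ≤ ‖ζ‖ ≤ φ`, this product would
exceed `φ^d`, whereas Landau's inequality gives `M(p)² ≤ d + 1`, which is `< φ^d` once `d ≥ 3`.
In degree `2` the roots satisfy `‖ζ₁‖‖ζ₂‖ = 1` and `‖ζ₁ + ζ₂‖ = ‖p₁‖ ≤ 1`, and `r - r⁻¹ ≤ 1`
forces `r ≤ φ`; in degree `1` the root has norm `1`.
-/

open Polynomial Real Function
open scoped goldenRatio

theorem le_goldenRatio_of_sub_inv_le_one {r : ℝ} (hr : 0 < r) (h : r - r⁻¹ ≤ 1) : r ≤ φ := by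
  have hq : r ^ 2 - r - 1 ≤ 0 := by
    have := mul_le_mul_of_nonneg_left h hr.le
    rw [mul_sub, mul_inv_cancel₀ hr.ne'] at this
    nlinarith
  nlinarith [goldenConj_neg, goldenRatio_add_goldenConj, goldenRatio_mul_goldenConj]

theorem natCast_add_one_lt_goldenRatio_pow {n : ℕ} (hn : 3 ≤ n) : (n + 1 : ℝ) < φ ^ n := by
  have hφ : 3 / 2 < φ := by
    have : (2 : ℝ) < √5 := by rw [Real.lt_sqrt] <;> norm_num
    unfold goldenRatio; linarith
  induction n, hn using Nat.le_induction with
  | base =>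
    have : φ ^ 3 = 2 * φ + 1 := by linear_combination (φ + 1) * goldenRatio_sq
    norm_num [this]; linarith
  | succ n hn ih =>
    have : (3 : ℝ) ≤ n := by exact_mod_cast hn
    rw [pow_succ]; push_cast; nlinarith

theorem log_goldenRatio_lt : log φ < 0.482 := by
  have hφ : φ < 1.6181 := by
    have : √5 < 2.2362 := by rw [Real.sqrt_lt'] <;> norm_num
    unfold goldenRatio; linarith
  have hexp := Real.sum_le_exp_of_nonneg (x := 0.482) (by norm_num) 5
  norm_num [Finset.sum_range_succ, Nat.factorial] at hexp
  rw [Real.log_lt_iff_lt_exp goldenRatio_pos]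
  linarith

theorem norm_coeff_zero_eq_norm_leadingCoeff_mul_prod_roots (p : ℂ[X]) :
    ‖p.coeff 0‖ = ‖p.leadingCoeff‖ * (p.roots.map (‖·‖)).prod := by
  rw [(IsAlgClosed.splits p).coeff_zero_eq_leadingCoeff_mul_prod_roots, norm_mul, norm_mul,
    norm_pow, norm_neg, norm_one, one_pow, one_mul]
  exact congrArg _ (map_multiset_prod (normHom : ℂ →*₀ ℝ) _)

theorem mahlerMeasure_sq_eq_mul_prod_roots {p : ℂ[X]} (h0 : p.coeff 0 ≠ 0) :
    p.mahlerMeasure ^ 2 =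
      ‖p.leadingCoeff‖ * ‖p.coeff 0‖ * (p.roots.map fun z ↦ max ‖z‖ ‖z‖⁻¹).prod := by
  have hroot : ∀ z ∈ p.roots, max 1 ‖z‖ ^ 2 = ‖z‖ * max ‖z‖ ‖z‖⁻¹ := by
    intro z hz
    have hz : 0 < ‖z‖ := norm_pos_iff.mpr <| by
      rintro rfl
      exact h0 (by simpa [coeff_zero_eq_eval_zero] using (mem_roots'.mp hz).2)
    rcases le_total ‖z‖ 1 with h | h
    · rw [max_eq_left h, max_eq_right (h.trans ((one_le_inv₀ hz).mpr h)), mul_inv_cancel₀ hz.ne',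
        one_pow]
    · rw [max_eq_right h, max_eq_left (((inv_le_one₀ hz).mpr h).trans h), sq]
  rw [mahlerMeasure_eq_leadingCoeff_mul_prod_roots,
    norm_coeff_zero_eq_norm_leadingCoeff_mul_prod_roots, mul_pow, ← Multiset.prod_map_pow,
    Multiset.map_congr rfl hroot, Multiset.prod_map_mul]
  ring

theorem mahlerMeasure_sq_le_natDegree_add_one {p : ℂ[X]} (hcoeff : ∀ n, ‖p.coeff n‖ ≤ 1) :
    p.mahlerMeasure ^ 2 ≤ p.natDegree + 1 := by
  have hsup : p.supNorm ≤ 1 := by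
    obtain ⟨i, hi⟩ := p.exists_eq_supNorm
    exact hi ▸ hcoeff i
  calc p.mahlerMeasure ^ 2 ≤ (√(p.natDegree + 1) * p.supNorm) ^ 2 := by
        gcongr
        · exact p.mahlerMeasure_nonneg
        · exact p.mahlerMeasure_le_sqrt_natDegree_add_one_mul_supNorm
    _ ≤ (√(p.natDegree + 1) * 1) ^ 2 := by
        gcongr
        exact mul_nonneg (sqrt_nonneg _) p.supNorm_nonneg
    _ = p.natDegree + 1 := by rw [mul_one, sq_sqrt (by positivity)]

theorem exists_mem_roots_max_norm_inv_le_goldenRatio_of_three_le_natDegree {p : ℂ[X]}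
    (hdeg : 3 ≤ p.natDegree) (hcoeff : ∀ n, ‖p.coeff n‖ ≤ 1) (h0 : ‖p.coeff 0‖ = 1)
    (hl : ‖p.leadingCoeff‖ = 1) : ∃ z ∈ p.roots, max ‖z‖ ‖z‖⁻¹ ≤ φ := by
  by_contra! hfar
  have hp0 : p.coeff 0 ≠ 0 := fun h ↦ by simp [h] at h0
  have hroots : p.roots ≠ 0 := by
    rw [← Multiset.card_pos, IsAlgClosed.card_roots_eq_natDegree]; omega
  have hlow : φ ^ p.natDegree < p.mahlerMeasure ^ 2 := by
    rw [mahlerMeasure_sq_eq_mul_prod_roots hp0, hl, h0, one_mul, one_mul,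
      ← IsAlgClosed.card_roots_eq_natDegree, ← Multiset.prod_replicate, ← Multiset.map_const']
    exact Multiset.prod_map_lt_prod_map hroots _ _ (fun _ _ ↦ goldenRatio_pos) hfar
  linarith [mahlerMeasure_sq_le_natDegree_add_one hcoeff, natCast_add_one_lt_goldenRatio_pow hdeg]

theorem exists_mem_roots_max_norm_inv_le_goldenRatio_of_natDegree_eq_two {p : ℂ[X]}
    (hdeg : p.natDegree = 2) (h1 : ‖p.coeff 1‖ ≤ 1) (h0 : ‖p.coeff 0‖ = 1)
    (hl : ‖p.leadingCoeff‖ = 1) : ∃ z ∈ p.roots, max ‖z‖ ‖z‖⁻¹ ≤ φ := by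
  obtain ⟨z, w, hzw⟩ := Multiset.card_eq_two.mp (IsAlgClosed.card_roots_eq_natDegree.trans hdeg)
  have hprod : ‖z‖ * ‖w‖ = 1 := by
    simpa [hzw, h0, hl] using (norm_coeff_zero_eq_norm_leadingCoeff_mul_prod_roots p).symm
  have hsum : ‖w + z‖ ≤ 1 := by
    have := (IsAlgClosed.splits p).nextCoeff_eq_neg_sum_roots_mul_leadingCoeff
    rw [nextCoeff_of_natDegree_pos (by omega), hdeg, hzw] at this
    simpa [this, hl, add_comm] using h1
  have hw : 0 < ‖w‖ := pos_of_mul_pos_right (hprod ▸ one_pos) (norm_nonneg z)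
  have habs : |‖w‖ - ‖w‖⁻¹| ≤ 1 := by
    rw [← eq_inv_of_mul_eq_one_left hprod]
    simpa using (abs_norm_sub_norm_le w (-z)).trans (by simpa using hsum)
  refine ⟨w, by simp [hzw], max_le ?_ ?_⟩
  · exact le_goldenRatio_of_sub_inv_le_one hw (abs_le.mp habs).2
  · refine le_goldenRatio_of_sub_inv_le_one (inv_pos.mpr hw) ?_
    linarith [(abs_le.mp habs).1, inv_inv ‖w‖]

theorem exists_mem_roots_max_norm_inv_le_goldenRatio {p : ℂ[X]} (hdeg : 0 < p.natDegree)
    (hcoeff : ∀ n, ‖p.coeff n‖ ≤ 1) (h0 : ‖p.coeff 0‖ = 1) (hl : ‖p.leadingCoeff‖ = 1) :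
    ∃ z ∈ p.roots, max ‖z‖ ‖z‖⁻¹ ≤ φ := by
  obtain hdeg | hdeg | hdeg : p.natDegree = 1 ∨ p.natDegree = 2 ∨ 3 ≤ p.natDegree := by omega
  · obtain ⟨z, hz⟩ := Multiset.card_eq_one.mp (IsAlgClosed.card_roots_eq_natDegree.trans hdeg)
    have hz1 : ‖z‖ = 1 := by
      simpa [hz, h0, hl] using (norm_coeff_zero_eq_norm_leadingCoeff_mul_prod_roots p).symm
    exact ⟨z, by simp [hz], by simp [hz1, one_lt_goldenRatio.le]⟩
  · exact exists_mem_roots_max_norm_inv_le_goldenRatio_of_natDegree_eq_two hdeg (hcoeff 1) h0 hl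
  · exact exists_mem_roots_max_norm_inv_le_goldenRatio_of_three_le_natDegree hdeg hcoeff h0 hl

section SparsePolynomial

variable {ι R : Type*} [Fintype ι] [Semiring R] {c : ι → R} {e : ι → ℕ}

theorem coeff_sum_C_mul_X_pow_apply (he : Injective e) (j : ι) :
    (∑ i, C (c i) * X ^ e i).coeff (e j) = c j := by
  classical
  simp [he.eq_iff]

theorem coeff_sum_C_mul_X_pow_eq_zero {n : ℕ} (hn : ∀ i, e i ≠ n) :
    (∑ i, C (c i) * X ^ e i).coeff n = 0 := by
  simp [fun i ↦ (hn i).symm]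

theorem natDegree_sum_C_mul_X_pow (he : Injective e) {j : ι} (hmax : ∀ i, e i ≤ e j)
    (hj : c j ≠ 0) : (∑ i, C (c i) * X ^ e i).natDegree = e j :=
  le_antisymm
    (natDegree_sum_le_of_forall_le _ _ fun i _ ↦ (natDegree_C_mul_X_pow_le _ _).trans (hmax i))
    (le_natDegree_of_ne_zero (by rwa [coeff_sum_C_mul_X_pow_apply he]))

end SparsePolynomial

theorem upoly_eq_eval {t : ℕ} {c : Fin t → ℂ} {a : Fin t → ℤ} (ha : ∀ i, 0 ≤ a i) (x : ℂ) :
    upoly c a x = (∑ i, C (c i) * X ^ (a i).toNat).eval x := by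
  simp [upoly, eval_finsetSum, ← zpow_natCast, Int.toNat_of_nonneg (ha _)]

section ArchTrop

variable {t : ℕ} {c : Fin t → ℂ} {a : Fin t → ℤ} {v : ℝ}

theorem notMem_ArchTrop1_of_forall_lt {j : Fin t}
    (h : ∀ l ≠ j, tropTerm1 c a v l < tropTerm1 c a v j) : v ∉ ArchTrop1 c a := by
  rintro ⟨i, k, hik, hmax, heq⟩
  by_cases hij : i = j
  · subst hij
    exact (h k (Ne.symm hik)).ne heq.symm
  · exact (h i hij).not_ge (hmax j)

theorem tropTerm1_lt_tropTerm1 {l j : Fin t} (hl : ‖c l‖ ≤ 1) (hj : ‖c j‖ = 1)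
    (h : (a l : ℝ) * v < a j * v) : tropTerm1 c a v l < tropTerm1 c a v j := by
  rw [tropTerm1, tropTerm1, hj, one_mul]
  exact (mul_le_of_le_one_left (exp_pos _).le hl).trans_lt (exp_lt_exp.mpr h)

theorem ArchTrop1_eq_singleton_zero (ha : StrictMono a) {j₀ j₁ : Fin t} (h₀ : ∀ i, j₀ ≤ i)
    (h₁ : ∀ i, i ≤ j₁) (hne : j₀ ≠ j₁) (hle : ∀ i, ‖c i‖ ≤ 1) (hc₀ : ‖c j₀‖ = 1)
    (hc₁ : ‖c j₁‖ = 1) : ArchTrop1 c a = {0} := by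
  ext v
  refine ⟨fun hv ↦ ?_, ?_⟩
  · by_contra hv0
    rcases lt_or_gt_of_ne hv0 with hneg | hpos
    · refine notMem_ArchTrop1_of_forall_lt (fun l hl ↦ tropTerm1_lt_tropTerm1 (hle l) hc₀ ?_) hv
      have : (a j₀ : ℝ) < a l := by exact_mod_cast ha ((h₀ l).lt_of_ne' hl)
      exact mul_lt_mul_of_neg_right this hneg
    · refine notMem_ArchTrop1_of_forall_lt (fun l hl ↦ tropTerm1_lt_tropTerm1 (hle l) hc₁ ?_) hv
      have : (a l : ℝ) < a j₁ := by exact_mod_cast ha ((h₁ l).lt_of_ne hl)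
      exact mul_lt_mul_of_pos_right this hpos
  · rintro rfl
    refine ⟨j₀, j₁, hne, fun l ↦ ?_, ?_⟩ <;> simp [tropTerm1, hc₀, hc₁, hle]

end ArchTrop

theorem abs_log_le_log_of_max_inv_le {x b : ℝ} (hx : 0 < x) (h : max x x⁻¹ ≤ b) :
    |log x| ≤ log b := by
  refine abs_le.mpr ⟨?_, log_le_log hx ((le_max_left _ _).trans h)⟩
  rw [neg_le, ← log_inv]
  exact log_le_log (inv_pos.mpr hx) ((le_max_right _ _).trans h)

theorem exists_upoly_eq_zero_abs_log_norm_le {t : ℕ} {c : Fin t → ℂ} {a : Fin t → ℤ}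
    (ha : StrictMono a) {j₀ j₁ : Fin t} (h₀ : ∀ i, j₀ ≤ i) (h₁ : ∀ i, i ≤ j₁) (hne : j₀ ≠ j₁)
    (ha₀ : a j₀ = 0) (hle : ∀ i, ‖c i‖ ≤ 1) (hc₀ : ‖c j₀‖ = 1) (hc₁ : ‖c j₁‖ = 1) :
    ∃ ζ : ℂ, ζ ≠ 0 ∧ upoly c a ζ = 0 ∧ |log ‖ζ‖| ≤ log φ := by
  have ha_nonneg (i : Fin t) : 0 ≤ a i := ha₀ ▸ ha.monotone (h₀ i)
  set e : Fin t → ℕ := fun i ↦ (a i).toNat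
  have he : StrictMono e := fun i j hij ↦
    (Int.toNat_lt_toNat ((ha_nonneg i).trans_lt (ha hij))).mpr (ha hij)
  have he₀ : e j₀ = 0 := by simp [e, ha₀]
  set p := ∑ i, C (c i) * X ^ e i
  have hdeg : p.natDegree = e j₁ := natDegree_sum_C_mul_X_pow he.injective
    (fun i ↦ he.monotone (h₁ i)) (norm_ne_zero_iff.mp (hc₁ ▸ one_ne_zero))
  have hcoeff (n : ℕ) : ‖p.coeff n‖ ≤ 1 := by
    by_cases hn : ∃ i, e i = n
    · obtain ⟨i, rfl⟩ := hn
      rw [coeff_sum_C_mul_X_pow_apply he.injective]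
      exact hle i
    · push Not at hn
      simp [p, coeff_sum_C_mul_X_pow_eq_zero hn]
  have h0 : ‖p.coeff 0‖ = 1 := by rw [← he₀, coeff_sum_C_mul_X_pow_apply he.injective, hc₀]
  have hl : ‖p.leadingCoeff‖ = 1 := by
    rw [leadingCoeff, hdeg, coeff_sum_C_mul_X_pow_apply he.injective, hc₁]
  have hpos : 0 < p.natDegree := by
    rw [hdeg, ← he₀]
    exact he ((h₀ j₁).lt_of_ne hne)
  obtain ⟨z, hz, hzφ⟩ := exists_mem_roots_max_norm_inv_le_goldenRatio hpos hcoeff h0 hl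
  have hz0 : z ≠ 0 := by
    rintro rfl
    have h0root : p.coeff 0 = 0 := by
      rw [coeff_zero_eq_eval_zero]; exact (mem_roots'.mp hz).2
    simp [h0root] at h0
  refine ⟨z, hz0, ?_, abs_log_le_log_of_max_inv_le (norm_pos_iff.mpr hz0) hzφ⟩
  rw [upoly_eq_eval ha_nonneg]
  exact (mem_roots'.mp hz).2

theorem stmt8 {t : ℕ} (ht : 2 ≤ t)
    (c : Fin t → ℂ) (a : Fin t → ℤ) (ha : StrictMono a)
    (ha0 : a ⟨0, by omega⟩ = 0)
    (hle : ∀ i, ‖c i‖ ≤ 1)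
    (hc0 : ‖c ⟨0, by omega⟩‖ = 1)
    (hcd : ‖c ⟨t - 1, by omega⟩‖ = 1) :
    ArchTrop1 c a = {0} ∧
    (∃ ζ : ℂ, ζ ≠ 0 ∧ upoly c a ζ = 0 ∧
      |Real.log (‖ζ‖)| ≤ Real.log ((Real.sqrt 5 + 1) / 2)) ∧
    Real.log ((Real.sqrt 5 + 1) / 2) < 0.482 := by
  have h₀ (i : Fin t) : ⟨0, by omega⟩ ≤ i := Fin.mk_le_of_le_val (Nat.zero_le _)
  have h₁ (i : Fin t) : i ≤ ⟨t - 1, by omega⟩ := Fin.le_def.mpr (by simp only; omega)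
  have hne : (⟨0, by omega⟩ : Fin t) ≠ ⟨t - 1, by omega⟩ := by
    simp only [ne_eq, Fin.mk.injEq]; omega
  rw [add_comm (√5), ← goldenRatio]
  exact ⟨ArchTrop1_eq_singleton_zero ha h₀ h₁ hne hle hc0 hcd,
    exists_upoly_eq_zero_abs_log_norm_le ha h₀ h₁ hne ha0 hle hc0 hcd, log_goldenRatio_lt⟩
end

section
/- For f(x) = x² − x − 1 one has ArchTrop(f) = {0}, and every root ζ ∈ ℂ of f satisfies |log|ζ|| = log((√5 + 1)/2); hence the distance from the point 0 ∈ ArchTrop(f) to Amoeba(f) is exactly log((√5+1)/2), so the bound log((√5+1)/2) is attained. -/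
/-! The three tropical terms `1, e^v, e^{2v}` have equal coefficient norms and distinct
exponents, so any two of them agree only at `v = 0`, where all of them agree. The roots of
`x² - x - 1` are the golden ratio `φ` and its conjugate `ψ = -φ⁻¹`, so `|log |ζ||` is `log φ`
for both. -/

open Real goldenRatio

theorem tropTerm1_eq_tropTerm1_iff {t : ℕ} {c : Fin t → ℂ} {a : Fin t → ℤ} {i k : Fin t}
    (hc : ‖c i‖ = ‖c k‖) (hc0 : c i ≠ 0) (ha : a i ≠ a k) (v : ℝ) :
    tropTerm1 c a v i = tropTerm1 c a v k ↔ v = 0 := by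
  have ha' : (a i : ℝ) - a k ≠ 0 := sub_ne_zero.mpr (by exact_mod_cast ha)
  rw [tropTerm1, tropTerm1, hc, mul_right_inj' (hc ▸ norm_ne_zero_iff.mpr hc0), exp_eq_exp,
    ← sub_eq_zero, ← sub_mul, mul_eq_zero, or_iff_right ha']

theorem archTrop1_eq_singleton_zero {t : ℕ} {c : Fin t → ℂ} {a : Fin t → ℤ}
    (hc : ∀ i k, ‖c i‖ = ‖c k‖) (hc0 : ∀ i, c i ≠ 0) (ha : Function.Injective a)
    (ht : 1 < t) : ArchTrop1 c a = {0} := by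
  ext v
  constructor
  · rintro ⟨i, k, hik, -, heq⟩
    exact (tropTerm1_eq_tropTerm1_iff (hc i k) (hc0 i) (ha.ne hik) v).mp heq
  · rintro rfl
    have hzero : ∀ l, tropTerm1 c a 0 l = ‖c ⟨0, by omega⟩‖ := fun l => by
      simpa [tropTerm1] using hc l _
    exact ⟨⟨0, by omega⟩, ⟨1, ht⟩, by simp, fun l => by rw [hzero, hzero],
      by rw [hzero, hzero]⟩

theorem sq_sub_self_sub_one_eq (z : ℂ) : z ^ 2 - z - 1 = (z - φ) * (z - ψ) := by
  have hsum : ((φ : ℂ) + ψ) = 1 := by exact_mod_cast goldenRatio_add_goldenConj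
  have hprod : ((φ : ℂ) * ψ) = -1 := by exact_mod_cast goldenRatio_mul_goldenConj
  linear_combination z * hsum - hprod

theorem abs_log_norm_eq_log_goldenRatio {z : ℂ} (hz : z ^ 2 - z - 1 = 0) :
    |log ‖z‖| = log φ := by
  rw [sq_sub_self_sub_one_eq, mul_eq_zero, sub_eq_zero, sub_eq_zero] at hz
  rcases hz with rfl | rfl
  · rw [Complex.norm_real, norm_of_nonneg goldenRatio_pos.le,
      abs_of_nonneg (log_nonneg one_lt_goldenRatio.le)]
  · rw [Complex.norm_real, norm_eq_abs, abs_of_neg goldenConj_neg, ← inv_goldenRatio, log_inv,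
      abs_neg, abs_of_nonneg (log_nonneg one_lt_goldenRatio.le)]

/-- For `f(x) = x² - x - 1` (coefficients `-1, -1, 1` for exponents `0, 1, 2`),
`ArchTrop(f) = {0}`, and every root `ζ` of `f` satisfies
`|log|ζ|| = log((√5+1)/2)`; in particular the distance from `0 ∈ ArchTrop(f)` to
`Amoeba(f)` is exactly `log((√5+1)/2)`, so this bound is attained. -/
theorem stmt9 :
    ArchTrop1 ![(-1 : ℂ), -1, 1] ![(0 : ℤ), 1, 2] = {0} ∧
    (∀ ζ : ℂ, ζ ^ 2 - ζ - 1 = 0 →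
      |Real.log (‖ζ‖)| = Real.log ((Real.sqrt 5 + 1) / 2)) ∧
    (∃ ζ : ℂ, ζ ^ 2 - ζ - 1 = 0 ∧
      |Real.log (‖ζ‖)| = Real.log ((Real.sqrt 5 + 1) / 2)) := by
  have hφ : (√5 + 1) / 2 = φ := by rw [add_comm]
  have hroot : (φ : ℂ) ^ 2 - φ - 1 = 0 := by rw [sq_sub_self_sub_one_eq, sub_self, zero_mul]
  refine ⟨?_, fun ζ hζ => hφ ▸ abs_log_norm_eq_log_goldenRatio hζ,
    ⟨φ, hroot, hφ ▸ abs_log_norm_eq_log_goldenRatio hroot⟩⟩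
  refine archTrop1_eq_singleton_zero (fun i k => ?_) (fun i => ?_) (by decide) (by norm_num)
  · fin_cases i <;> fin_cases k <;> simp
  · fin_cases i <;> simp
end

section
/- Assume ArchTrop(f) has exactly 2 elements. Then for every σ ∈ ArchTrop(f) there exists a root ζ ∈ ℂ∖{0} of f with |σ − log|ζ|| ≤ 1 + log(t−1). -/
/-!
Write `T_i(v) = |c_i| e^{a_i v}`, let `σ₁ < σ₂` be the two points of `ArchTrop(f)` and
`d = 1 + log (t - 1)`; the substitution `z ↦ 1/z` exchanges `σ₁` and `σ₂`, so it suffices to treat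
`σ₁`. The maximum of the `T_i` is attained by `T_0` at `σ₁`, by `T_{t-1}` at `σ₂`, and by one
`T_m` with `m > 0` at both. Since `T_0` is maximal at `σ₁`, once `log |z| ≤ σ₁ - d` the other
`t - 1` terms sum to less than `|c_0 z^{a_0}|`, so every root has `log |ζ| > σ₁ - d`. It remains to
find a root with `log |ζ| ≤ σ₁ + d`. If `σ₂ ≤ σ₁ + d`, Vieta gives
`∏ |ζ| = |c_0 / c_{t-1}| ≤ e^{σ₂ (a_{t-1} - a_0)}`, so some root has `log |ζ| ≤ σ₂`. Otherwise, at
`v = σ₁ + d/2` each `T_i` is at most `x^{|a_i - a_m|} T_m` with `x = e^{-d/2}`; these factors sum to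
at most `(t - 1) x² + 1/2 = e^{-1} + 1/2 < 1`, and Pellet's theorem gives a root with `log |ζ| < v`.
-/

open Finset Polynomial

def IsTropMax {t : ℕ} (c : Fin t → ℂ) (a : Fin t → ℤ) (v : ℝ) (i : Fin t) : Prop :=
  ∀ l, tropTerm1 c a v l ≤ tropTerm1 c a v i

/-- The point where the graphs of `log |c_i| + a_i v` and `log |c_k| + a_k v` cross. -/
noncomputable def crossing {t : ℕ} (c : Fin t → ℂ) (a : Fin t → ℤ) (i k : Fin t) : ℝ :=
  (Real.log ‖c i‖ - Real.log ‖c k‖) / (a k - a i)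

section Tropical

variable {t : ℕ} {c : Fin t → ℂ} {a : Fin t → ℤ}

lemma tropTerm1_pos (hc : ∀ i, c i ≠ 0) (v : ℝ) (i : Fin t) : 0 < tropTerm1 c a v i :=
  mul_pos (norm_pos_iff.2 (hc i)) (Real.exp_pos _)

lemma tropTerm1_eq_mul_exp (v w : ℝ) (i : Fin t) :
    tropTerm1 c a w i = tropTerm1 c a v i * Real.exp (a i * (w - v)) := by
  rw [tropTerm1, tropTerm1, mul_assoc, ← Real.exp_add]
  ring_nf

lemma tropTerm1_le_mul_exp {v : ℝ} {i j : Fin t} (h : tropTerm1 c a v j ≤ tropTerm1 c a v i)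
    (w : ℝ) : tropTerm1 c a w j ≤ tropTerm1 c a w i * Real.exp ((a j - a i) * (w - v)) := by
  have hexp : (a i : ℝ) * (w - v) + (a j - a i) * (w - v) = a j * (w - v) := by ring
  rw [tropTerm1_eq_mul_exp v w j, tropTerm1_eq_mul_exp v w i, mul_assoc, ← Real.exp_add, hexp]
  exact mul_le_mul_of_nonneg_right h (Real.exp_pos _).le

lemma tropTerm1_lt_of_le (hc : ∀ i, c i ≠ 0) {v w : ℝ} {i j : Fin t}
    (h : tropTerm1 c a v j ≤ tropTerm1 c a v i) (hji : a j < a i) (hvw : v < w) :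
    tropTerm1 c a w j < tropTerm1 c a w i := by
  refine (tropTerm1_le_mul_exp h w).trans_lt (mul_lt_of_lt_one_right (tropTerm1_pos hc w i) ?_)
  rw [Real.exp_lt_one_iff]
  exact mul_neg_of_neg_of_pos (sub_neg.2 (by exact_mod_cast hji)) (sub_pos.2 hvw)

lemma log_tropTerm1 (hc : ∀ i, c i ≠ 0) (v : ℝ) (i : Fin t) :
    Real.log (tropTerm1 c a v i) = Real.log ‖c i‖ + a i * v := by
  rw [tropTerm1, Real.log_mul (norm_ne_zero_iff.2 (hc i)) (Real.exp_ne_zero _), Real.log_exp]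

lemma tropTerm1_le_iff_le_crossing (hc : ∀ i, c i ≠ 0) {i k : Fin t} (hik : a i < a k) (u : ℝ) :
    tropTerm1 c a u k ≤ tropTerm1 c a u i ↔ u ≤ crossing c a i k := by
  rw [← Real.log_le_log_iff (tropTerm1_pos hc u k) (tropTerm1_pos hc u i), log_tropTerm1 hc,
    log_tropTerm1 hc, crossing, le_div_iff₀ (sub_pos.2 (by exact_mod_cast hik))]
  constructor <;> intro h <;> linarith

lemma tropTerm1_le_iff_crossing_le (hc : ∀ i, c i ≠ 0) {i k : Fin t} (hik : a i < a k) (u : ℝ) :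
    tropTerm1 c a u i ≤ tropTerm1 c a u k ↔ crossing c a i k ≤ u := by
  rw [← Real.log_le_log_iff (tropTerm1_pos hc u i) (tropTerm1_pos hc u k), log_tropTerm1 hc,
    log_tropTerm1 hc, crossing, div_le_iff₀ (sub_pos.2 (by exact_mod_cast hik))]
  constructor <;> intro h <;> linarith

lemma mem_archTrop1_iff {v : ℝ} :
    v ∈ ArchTrop1 c a ↔ ∃ i k, i ≠ k ∧ IsTropMax c a v i ∧ IsTropMax c a v k := by
  constructor
  · rintro ⟨i, k, hik, hi, heq⟩
    exact ⟨i, k, hik, hi, fun l => heq ▸ hi l⟩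
  · rintro ⟨i, k, hik, hi, hk⟩
    exact ⟨i, k, hik, hi, le_antisymm (hk i) (hi k)⟩

lemma exists_isTropMax_ne {v : ℝ} (hv : v ∈ ArchTrop1 c a) (j : Fin t) :
    ∃ k, k ≠ j ∧ IsTropMax c a v k := by
  obtain ⟨i, k, hik, hi, hk⟩ := mem_archTrop1_iff.1 hv
  by_cases hij : i = j
  · exact ⟨k, hij ▸ hik.symm, hk⟩
  · exact ⟨i, hij, hi⟩

lemma exists_isTropMax_forall_gt_lt [NeZero t] (v : ℝ) :
    ∃ i, IsTropMax c a v i ∧ ∀ k, i < k → tropTerm1 c a v k < tropTerm1 c a v i := by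
  classical
  have hne : (univ.filter (IsTropMax c a v)).Nonempty := by
    obtain ⟨i, -, hi⟩ := univ.exists_max_image (tropTerm1 c a v) univ_nonempty
    exact ⟨i, mem_filter.2 ⟨mem_univ _, fun l => hi l (mem_univ l)⟩⟩
  have hi : IsTropMax c a v ((univ.filter (IsTropMax c a v)).max' hne) :=
    (mem_filter.1 (max'_mem _ hne)).2
  refine ⟨_, hi, fun k hik => (hi k).lt_of_ne fun heq => hik.not_ge (le_max' _ k ?_)⟩
  exact mem_filter.2 ⟨mem_univ _, fun l => heq ▸ hi l⟩

/-- `u` is the first crossing, right of `v`, of `T_i` with a term of larger exponent. -/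
lemma exists_mem_archTrop1_gt (hc : ∀ i, c i ≠ 0) (ha : StrictMono a) {v : ℝ} {i k₀ : Fin t}
    (hik₀ : i < k₀) (hi : IsTropMax c a v i)
    (hgt : ∀ k, i < k → tropTerm1 c a v k < tropTerm1 c a v i) :
    ∃ u, v < u ∧ u ∈ ArchTrop1 c a ∧ IsTropMax c a u i := by
  classical
  obtain ⟨k, hk, hmin⟩ :=
    (univ.filter (i < ·)).exists_min_image (crossing c a i) ⟨k₀, by simpa using hik₀⟩
  replace hk : i < k := (mem_filter.1 hk).2
  have hvu : v < crossing c a i k :=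
    not_le.1 fun h => (hgt k hk).not_ge ((tropTerm1_le_iff_crossing_le hc (ha hk) v).2 h)
  have hmax : IsTropMax c a (crossing c a i k) i := by
    intro l
    rcases lt_trichotomy l i with hl | rfl | hl
    · exact (tropTerm1_lt_of_le hc (hi l) (ha hl) hvu).le
    · exact le_rfl
    · exact (tropTerm1_le_iff_le_crossing hc (ha hl) _).2 (hmin l (by simpa using hl))
  refine ⟨_, hvu, ⟨i, k, hk.ne, hmax, le_antisymm ?_ (hmax k)⟩, hmax⟩
  exact (tropTerm1_le_iff_crossing_le hc (ha hk) _).2 le_rfl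

end Tropical

section Reversal

variable {t : ℕ} {c : Fin t → ℂ} {a : Fin t → ℤ}

lemma strictMono_neg_comp_rev (ha : StrictMono a) : StrictMono fun i => -a (Fin.rev i) :=
  fun _ _ hij => neg_lt_neg (ha (Fin.rev_lt_rev.2 hij))

lemma tropTerm1_rev (v : ℝ) (i : Fin t) :
    tropTerm1 (fun i => c i.rev) (fun i => -a i.rev) v i = tropTerm1 c a (-v) i.rev := by
  simp [tropTerm1]

lemma isTropMax_rev {v : ℝ} {i : Fin t} :
    IsTropMax (fun i => c i.rev) (fun i => -a i.rev) v i ↔ IsTropMax c a (-v) i.rev := by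
  simp only [IsTropMax, tropTerm1_rev]
  exact (Fin.rev_surjective.forall (p := fun l => _ ≤ tropTerm1 c a (-v) i.rev)).symm

lemma mem_archTrop1_rev {v : ℝ} :
    v ∈ ArchTrop1 (fun i => c i.rev) (fun i => -a i.rev) ↔ -v ∈ ArchTrop1 c a := by
  simp only [mem_archTrop1_iff, isTropMax_rev]
  constructor
  · rintro ⟨i, k, hik, hi, hk⟩
    exact ⟨i.rev, k.rev, Fin.rev_injective.ne hik, hi, hk⟩
  · rintro ⟨i, k, hik, hi, hk⟩
    exact ⟨i.rev, k.rev, Fin.rev_injective.ne hik, by simpa using hi, by simpa using hk⟩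

lemma upoly_rev (z : ℂ) : upoly (fun i => c i.rev) (fun i => -a i.rev) z = upoly c a z⁻¹ := by
  rw [upoly, upoly, ← Equiv.sum_comp Fin.revPerm]
  simp [inv_zpow']

end Reversal

section Extremal

variable {n : ℕ} {c : Fin (n + 1) → ℂ} {a : Fin (n + 1) → ℤ}

lemma isTropMax_last_of_mem_upperBounds (hc : ∀ i, c i ≠ 0) (ha : StrictMono a) {σ : ℝ}
    (hσ : σ ∈ upperBounds (ArchTrop1 c a)) : IsTropMax c a σ (Fin.last n) := by
  obtain ⟨i, hi, hgt⟩ := exists_isTropMax_forall_gt_lt (c := c) (a := a) σ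
  rcases (Fin.le_last i).lt_or_eq with hlt | rfl
  · obtain ⟨u, hσu, hu, -⟩ := exists_mem_archTrop1_gt hc ha hlt hi hgt
    exact absurd (hσ hu) hσu.not_ge
  · exact hi

lemma isTropMax_zero_of_mem_lowerBounds (hc : ∀ i, c i ≠ 0) (ha : StrictMono a) {σ : ℝ}
    (hσ : σ ∈ lowerBounds (ArchTrop1 c a)) : IsTropMax c a σ 0 := by
  have h := isTropMax_last_of_mem_upperBounds (c := fun i => c i.rev) (a := fun i => -a i.rev)
    (fun i => hc _) (strictMono_neg_comp_rev ha) (σ := -σ)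
    (fun u hu => le_neg_of_le_neg (hσ (mem_archTrop1_rev.1 hu)))
  rwa [isTropMax_rev, neg_neg, Fin.rev_last] at h

lemma exists_isTropMax_of_archTrop1_eq_pair (hc : ∀ i, c i ≠ 0) (ha : StrictMono a)
    {σ₁ σ₂ : ℝ} (hlt : σ₁ < σ₂) (hA : ArchTrop1 c a = {σ₁, σ₂}) :
    ∃ m, m ≠ 0 ∧ IsTropMax c a σ₁ m ∧ IsTropMax c a σ₂ m := by
  have hσ₁ : σ₁ ∈ ArchTrop1 c a := by simp [hA]
  have hσ₂ : σ₂ ∈ ArchTrop1 c a := by simp [hA]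
  obtain ⟨m, hm, hgt⟩ := exists_isTropMax_forall_gt_lt (c := c) (a := a) σ₁
  have hm0 : m ≠ 0 := by
    obtain ⟨k, hk0, hk⟩ := exists_isTropMax_ne hσ₁ 0
    rintro rfl
    exact (hgt k (Fin.pos_of_ne_zero hk0)).not_ge (hk 0)
  have hmlast : m < Fin.last n := by
    refine (Fin.le_last m).lt_of_ne fun hml => ?_
    obtain ⟨k, hk, hkmax⟩ := exists_isTropMax_ne hσ₂ m
    have hkm : k < m := hml ▸ (Fin.le_last k).lt_of_ne (hml ▸ hk)
    exact (tropTerm1_lt_of_le hc (hm k) (ha hkm) hlt).not_ge (hkmax m)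
  obtain ⟨u, hu, huA, hmu⟩ := exists_mem_archTrop1_gt hc ha hmlast hm hgt
  rw [hA] at huA
  rcases huA with rfl | rfl
  · exact absurd hu (lt_irrefl _)
  · exact ⟨m, hm0, hm, hmu⟩

end Extremal

lemma one_half_lt_re_inv {w : ℂ} (h : ‖w - 1‖ < 1) : 1 / 2 < (w⁻¹).re := by
  have hw : w ≠ 0 := by rintro rfl; simp at h
  have hsq : Complex.normSq (w - 1) < 1 := by
    rw [Complex.normSq_eq_norm_sq]; nlinarith [norm_nonneg (w - 1)]
  have hexpand : Complex.normSq (w - 1) = Complex.normSq w - 2 * w.re + 1 := by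
    simp only [Complex.normSq_apply, Complex.sub_re, Complex.sub_im, Complex.one_re,
      Complex.one_im]
    ring
  rw [Complex.inv_re, lt_div_iff₀ (Complex.normSq_pos.2 hw)]
  linarith

theorem exists_zero_of_norm_sub_monomial_lt {F : ℂ → ℂ} (hF : Differentiable ℂ F) {c : ℂ}
    {b : ℕ} (hb : b ≠ 0) {R : ℝ} (hR : 0 < R)
    (h : ∀ z : ℂ, ‖z‖ = R → ‖F z - c * z ^ b‖ < ‖c * z ^ b‖) :
    ∃ z, ‖z‖ < R ∧ F z = 0 := by
  by_contra! hne
  have hF0 : ∀ z ∈ closure (Metric.ball (0 : ℂ) R), F z ≠ 0 := by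
    intro z hz hFz
    rw [closure_ball _ hR.ne', mem_closedBall_zero_iff] at hz
    rcases hz.lt_or_eq with hlt | heq
    · exact hne z hlt hFz
    · simpa [hFz] using h z heq
  -- `exp (-c z^b / F z)` equals `1` at the centre but has modulus `≤ e^{-1/2}` on the circle.
  set G : ℂ → ℂ := fun z => Complex.exp (-(c * z ^ b / F z))
  have hG : DiffContOnCl ℂ G (Metric.ball 0 R) := by
    refine DifferentiableOn.diffContOnCl fun z hz => ?_
    exact ((((differentiable_const c).mul (differentiable_pow b)).differentiableAt.div
      hF.differentiableAt (hF0 z hz)).neg.cexp).differentiableWithinAt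
  have hfrontier : ∀ z ∈ frontier (Metric.ball (0 : ℂ) R), ‖G z‖ ≤ Real.exp (-(1 / 2)) := by
    intro z hz
    rw [frontier_ball _ hR.ne', mem_sphere_zero_iff_norm] at hz
    have hlt := h z hz
    have hcz : c * z ^ b ≠ 0 := norm_pos_iff.1 ((norm_nonneg _).trans_lt hlt)
    have hre : 1 / 2 < (c * z ^ b / F z).re := by
      have := one_half_lt_re_inv (w := F z / (c * z ^ b))
        (by rwa [div_sub_one hcz, norm_div, div_lt_one (norm_pos_iff.2 hcz)])
      rwa [inv_div] at this
    rw [Complex.norm_exp, Complex.neg_re, Real.exp_le_exp]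
    linarith
  have hcentre := Complex.norm_le_of_forall_mem_frontier_norm_le Metric.isBounded_ball hG
    hfrontier (subset_closure (Metric.mem_ball_self hR))
  have hG0 : G 0 = 1 := by simp [G, zero_pow hb]
  rw [hG0, norm_one] at hcentre
  exact (Real.exp_lt_one_iff.2 (by norm_num : -(1 / 2 : ℝ) < 0)).not_ge hcentre

/-- By Vieta, `‖p(0)‖ = ‖lc p‖ * ∏ ‖ζ‖` over the roots, so some root is at most their geometric
mean. -/
theorem Polynomial.exists_isRoot_norm_le {p : ℂ[X]} (hp : p.natDegree ≠ 0) {R : ℝ} (hR : 0 < R)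
    (h : ‖p.coeff 0‖ ≤ ‖p.leadingCoeff‖ * R ^ p.natDegree) : ∃ z, p.IsRoot z ∧ ‖z‖ ≤ R := by
  have hp0 : p ≠ 0 := by rintro rfl; simp at hp
  by_contra! hroots
  have hcard : Multiset.card p.roots = p.natDegree := IsAlgClosed.card_roots_eq_natDegree
  have hprod : R ^ p.natDegree < (p.roots.map (‖·‖)).prod := by
    calc R ^ p.natDegree = (p.roots.map fun _ => R).prod := by
          rw [Multiset.map_const', Multiset.prod_replicate, hcard]
      _ < (p.roots.map (‖·‖)).prod :=
          Multiset.prod_map_lt_prod_map (by rw [← Multiset.card_pos, hcard]; omega) _ _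
            (fun _ _ => hR) fun z hz => hroots z (isRoot_of_mem_roots hz)
  have hcoeff : ‖p.coeff 0‖ = ‖p.leadingCoeff‖ * (p.roots.map (‖·‖)).prod := by
    rw [(IsAlgClosed.splits p).coeff_zero_eq_leadingCoeff_mul_prod_roots, norm_mul, norm_mul,
      norm_pow, norm_neg, norm_one, one_pow, one_mul]
    exact congrArg _ (map_multiset_prod (normHom (α := ℂ)) _)
  have hlc : 0 < ‖p.leadingCoeff‖ := norm_pos_iff.2 (leadingCoeff_ne_zero.2 hp0)
  nlinarith

section Dominance

variable {t : ℕ} {c : Fin t → ℂ} {a : Fin t → ℤ}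

lemma norm_mul_zpow_eq_tropTerm1 {z : ℂ} (hz : z ≠ 0) (i : Fin t) :
    ‖c i * z ^ a i‖ = tropTerm1 c a (Real.log ‖z‖) i := by
  rw [norm_mul, norm_zpow, tropTerm1, ← Real.rpow_intCast, Real.rpow_def_of_pos (norm_pos_iff.2 hz),
    mul_comm (Real.log _)]

lemma norm_sum_erase_lt_of_dominant {z : ℂ} (hz : z ≠ 0) {m : Fin t}
    (h : ∑ i ∈ univ.erase m, tropTerm1 c a (Real.log ‖z‖) i < tropTerm1 c a (Real.log ‖z‖) m) :
    ‖∑ i ∈ univ.erase m, c i * z ^ a i‖ < ‖c m * z ^ a m‖ := by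
  rw [norm_mul_zpow_eq_tropTerm1 hz]
  refine (norm_sum_le _ _).trans_lt ?_
  simpa only [norm_mul_zpow_eq_tropTerm1 hz] using h

lemma upoly_ne_zero_of_dominant {z : ℂ} (hz : z ≠ 0) {m : Fin t}
    (h : ∑ i ∈ univ.erase m, tropTerm1 c a (Real.log ‖z‖) i < tropTerm1 c a (Real.log ‖z‖) m) :
    upoly c a z ≠ 0 := by
  intro hroot
  have hlt := norm_sum_erase_lt_of_dominant hz h
  rw [upoly, ← add_sum_erase _ _ (mem_univ m), add_eq_zero_iff_eq_neg] at hroot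
  rw [hroot, norm_neg] at hlt
  exact lt_irrefl _ hlt

/-- The `2` accounts for the at most two exponents at distance `1` from `k`. -/
lemma sum_pow_natAbs_sub_le {ι : Type*} {s : Finset ι} {e : ι → ℤ} (he : Set.InjOn e s) {k : ℤ}
    (hk : ∀ i ∈ s, e i ≠ k) {x : ℝ} (hx₀ : 0 ≤ x) (hx₁ : x ≤ 1) :
    ∑ i ∈ s, x ^ (e i - k).natAbs ≤ #s * x ^ 2 + 2 * (x - x ^ 2) := by
  classical
  have hterm : ∀ i ∈ s,
      x ^ (e i - k).natAbs ≤ x ^ 2 + if (e i - k).natAbs = 1 then x - x ^ 2 else 0 := by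
    intro i hi
    split_ifs with h1
    · rw [h1]; linarith
    · have h2 : 2 ≤ (e i - k).natAbs := by have := hk i hi; omega
      simpa using pow_le_pow_of_le_one hx₀ hx₁ h2
  have hcard : #(s.filter fun i => (e i - k).natAbs = 1) ≤ 2 := by
    refine (card_le_card_of_injOn (fun i => e i - k) (t := {-1, 1}) ?_ ?_).trans card_le_two
    · intro i hi
      rcases Int.natAbs_eq_iff.1 (mem_filter.1 hi).2 with h | h <;> simp [h]
    · intro i hi j hj hij
      exact he (mem_filter.1 hi).1 (mem_filter.1 hj).1 (sub_left_injective hij)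
  calc ∑ i ∈ s, x ^ (e i - k).natAbs
      ≤ ∑ i ∈ s, (x ^ 2 + if (e i - k).natAbs = 1 then x - x ^ 2 else 0) := sum_le_sum hterm
    _ = #s * x ^ 2 + #(s.filter fun i => (e i - k).natAbs = 1) * (x - x ^ 2) := by
      rw [sum_add_distrib, sum_const, sum_ite, sum_const_zero, add_zero, sum_const,
        nsmul_eq_mul, nsmul_eq_mul]
    _ ≤ #s * x ^ 2 + 2 * (x - x ^ 2) := by
      gcongr
      · nlinarith
      · exact_mod_cast hcard

end Dominance

lemma natCast_mul_exp_neg_one_add_log {n : ℕ} (hn : n ≠ 0) :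
    (n : ℝ) * Real.exp (-(1 + Real.log n)) = Real.exp (-1) := by
  have hpos : (0 : ℝ) < n := by positivity
  rw [neg_add, Real.exp_add, Real.exp_neg (Real.log n), Real.exp_log hpos]
  field_simp

/-- The polynomial `g` with `f(z) = z^{a_0} g(z)`. -/
noncomputable def shiftPoly {n : ℕ} (c : Fin (n + 1) → ℂ) (a : Fin (n + 1) → ℤ) : ℂ[X] :=
  ∑ i, C (c i) * X ^ (a i - a 0).toNat

section ShiftPoly

variable {n : ℕ} {c : Fin (n + 1) → ℂ} {a : Fin (n + 1) → ℤ}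

lemma mul_pow_toNat_sub (ha : Monotone a) {z : ℂ} (hz : z ≠ 0) (i : Fin (n + 1)) :
    c i * z ^ (a i - a 0).toNat = c i * z ^ a i / z ^ a 0 := by
  rw [← zpow_natCast, Int.toNat_of_nonneg (sub_nonneg.2 (ha (Fin.zero_le i))), zpow_sub₀ hz,
    mul_div_assoc]

lemma eval_shiftPoly (z : ℂ) : (shiftPoly c a).eval z = ∑ i, c i * z ^ (a i - a 0).toNat := by
  simp [shiftPoly, eval_finsetSum]

lemma upoly_eq_zpow_mul_eval_shiftPoly (ha : Monotone a) {z : ℂ} (hz : z ≠ 0) :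
    upoly c a z = z ^ a 0 * (shiftPoly c a).eval z := by
  rw [eval_shiftPoly, mul_sum, upoly]
  refine sum_congr rfl fun i _ => ?_
  rw [mul_pow_toNat_sub ha hz, mul_div_cancel₀ _ (zpow_ne_zero _ hz)]

lemma coeff_shiftPoly (ha : StrictMono a) (i : Fin (n + 1)) :
    (shiftPoly c a).coeff (a i - a 0).toNat = c i := by
  simp only [shiftPoly, finsetSum_coeff, coeff_C_mul, coeff_X_pow]
  rw [sum_eq_single i (fun j _ hji => ?_) (by simp)]
  · simp
  · have h0i := ha.monotone (Fin.zero_le i)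
    have h0j := ha.monotone (Fin.zero_le j)
    rw [if_neg fun h => hji (ha.injective (by omega)), mul_zero]

lemma coeff_zero_shiftPoly (ha : StrictMono a) : (shiftPoly c a).coeff 0 = c 0 := by
  simpa using coeff_shiftPoly (c := c) ha 0

lemma natDegree_shiftPoly (hc : ∀ i, c i ≠ 0) (ha : StrictMono a) :
    (shiftPoly c a).natDegree = (a (Fin.last n) - a 0).toNat := by
  refine le_antisymm (natDegree_sum_le_of_forall_le _ _ fun i _ => ?_)
    (le_natDegree_of_ne_zero (by rw [coeff_shiftPoly ha]; exact hc _))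
  refine (natDegree_C_mul_X_pow_le _ _).trans ?_
  have := ha.monotone (Fin.le_last i)
  omega

lemma leadingCoeff_shiftPoly (hc : ∀ i, c i ≠ 0) (ha : StrictMono a) :
    (shiftPoly c a).leadingCoeff = c (Fin.last n) := by
  rw [leadingCoeff, natDegree_shiftPoly hc ha, coeff_shiftPoly ha]

lemma ne_zero_of_isRoot_shiftPoly (hc : ∀ i, c i ≠ 0) (ha : StrictMono a) {z : ℂ}
    (hz : (shiftPoly c a).IsRoot z) : z ≠ 0 := by
  rintro rfl
  rw [IsRoot, ← coeff_zero_eq_eval_zero, coeff_zero_shiftPoly ha] at hz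
  exact hc 0 hz

lemma exists_root_of_dominant (hc : ∀ i, c i ≠ 0) (ha : StrictMono a) {m : Fin (n + 1)}
    (hm : m ≠ 0) {v : ℝ}
    (h : ∑ i ∈ univ.erase m, tropTerm1 c a v i < tropTerm1 c a v m) :
    ∃ z, z ≠ 0 ∧ upoly c a z = 0 ∧ Real.log ‖z‖ < v := by
  have hb : (a m - a 0).toNat ≠ 0 := by
    have := ha (Fin.pos_of_ne_zero hm)
    omega
  have hdom : ∀ z : ℂ, ‖z‖ = Real.exp v → ‖(shiftPoly c a).eval z - c m * z ^ (a m - a 0).toNat‖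
      < ‖c m * z ^ (a m - a 0).toNat‖ := by
    intro z hzv
    have hz : z ≠ 0 := by
      rintro rfl
      exact (Real.exp_pos v).ne (by simpa using hzv)
    have hlog : Real.log ‖z‖ = v := by rw [hzv, Real.log_exp]
    have hlt := norm_sum_erase_lt_of_dominant hz (hlog ▸ h)
    rw [eval_shiftPoly, ← add_sum_erase _ _ (mem_univ m), add_sub_cancel_left]
    simp only [mul_pow_toNat_sub ha.monotone hz, ← sum_div, norm_div]
    exact div_lt_div_of_pos_right hlt (norm_pos_iff.2 (zpow_ne_zero _ hz))
  obtain ⟨z, hzv, hroot⟩ :=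
    exists_zero_of_norm_sub_monomial_lt (shiftPoly c a).differentiable hb (Real.exp_pos v) hdom
  have hz : z ≠ 0 := ne_zero_of_isRoot_shiftPoly hc ha hroot
  refine ⟨z, hz, ?_, (Real.log_lt_iff_lt_exp (norm_pos_iff.2 hz)).2 hzv⟩
  rw [upoly_eq_zpow_mul_eval_shiftPoly ha.monotone hz, hroot, mul_zero]

end ShiftPoly

section Roots

variable {n : ℕ} {c : Fin (n + 1) → ℂ} {a : Fin (n + 1) → ℤ}

lemma sub_lt_log_norm_of_isTropMax_zero (hc : ∀ i, c i ≠ 0) (ha : StrictMono a) (hn : n ≠ 0)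
    {σ : ℝ} (h0 : IsTropMax c a σ 0) {z : ℂ} (hz : z ≠ 0) (hroot : upoly c a z = 0) :
    σ - (1 + Real.log n) < Real.log ‖z‖ := by
  by_contra! hle
  set v := Real.log ‖z‖
  have hlog : 0 ≤ Real.log n := Real.log_nonneg (by exact_mod_cast Nat.one_le_iff_ne_zero.2 hn)
  have hterm : ∀ i ∈ univ.erase 0,
      tropTerm1 c a v i ≤ tropTerm1 c a v 0 * Real.exp (-(1 + Real.log n)) := by
    intro i hi
    have hai : (1 : ℝ) ≤ a i - a 0 := by
      have := ha (Fin.pos_of_ne_zero (ne_of_mem_erase hi))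
      exact_mod_cast (by omega : (1 : ℤ) ≤ a i - a 0)
    refine (tropTerm1_le_mul_exp (h0 i) v).trans
      (mul_le_mul_of_nonneg_left (Real.exp_le_exp.2 ?_) (tropTerm1_pos hc v 0).le)
    nlinarith
  refine upoly_ne_zero_of_dominant hz (m := 0) ?_ hroot
  calc ∑ i ∈ univ.erase 0, tropTerm1 c a v i
      ≤ ∑ i ∈ univ.erase 0, tropTerm1 c a v 0 * Real.exp (-(1 + Real.log n)) := sum_le_sum hterm
    _ = tropTerm1 c a v 0 * Real.exp (-1) := by
      rw [sum_const, card_erase_of_mem (mem_univ _), card_univ, Fintype.card_fin,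
        add_tsub_cancel_right, nsmul_eq_mul, mul_left_comm, natCast_mul_exp_neg_one_add_log hn]
    _ < tropTerm1 c a v 0 :=
      mul_lt_of_lt_one_right (tropTerm1_pos hc v 0) (Real.exp_lt_one_iff.2 (by norm_num))

lemma exists_root_log_norm_le (hc : ∀ i, c i ≠ 0) (ha : StrictMono a) (hn : n ≠ 0) {v : ℝ}
    (h : tropTerm1 c a v 0 ≤ tropTerm1 c a v (Fin.last n)) :
    ∃ z, z ≠ 0 ∧ upoly c a z = 0 ∧ Real.log ‖z‖ ≤ v := by
  have hlast : a 0 < a (Fin.last n) := ha (Fin.lt_def.2 (by simp; omega))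
  have hcast : (((a (Fin.last n) - a 0).toNat : ℕ) : ℝ) = a (Fin.last n) - a 0 := by
    exact_mod_cast Int.toNat_of_nonneg (sub_nonneg.2 hlast.le)
  have hbound : ‖(shiftPoly c a).coeff 0‖
      ≤ ‖(shiftPoly c a).leadingCoeff‖ * Real.exp v ^ (shiftPoly c a).natDegree := by
    have key := tropTerm1_le_mul_exp h 0
    simp only [tropTerm1, mul_zero, Real.exp_zero, mul_one] at key
    rw [coeff_zero_shiftPoly ha, leadingCoeff_shiftPoly hc ha, natDegree_shiftPoly hc ha,
      ← Real.exp_nat_mul, hcast]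
    convert key using 3
    ring
  obtain ⟨z, hroot, hzv⟩ := (shiftPoly c a).exists_isRoot_norm_le
    (by rw [natDegree_shiftPoly hc ha]; omega) (Real.exp_pos v) hbound
  have hz : z ≠ 0 := ne_zero_of_isRoot_shiftPoly hc ha hroot
  refine ⟨z, hz, ?_, (Real.log_le_iff_le_exp (norm_pos_iff.2 hz)).2 hzv⟩
  rw [upoly_eq_zpow_mul_eval_shiftPoly ha.monotone hz, hroot.eq_zero, mul_zero]

lemma exists_root_log_norm_lt_of_isTropMax (hc : ∀ i, c i ≠ 0) (ha : StrictMono a) (hn : n ≠ 0)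
    {m : Fin (n + 1)} (hm : m ≠ 0) {σ₁ σ₂ : ℝ} (h₁ : IsTropMax c a σ₁ m) (h₂ : IsTropMax c a σ₂ m)
    (hgap : σ₁ + (1 + Real.log n) < σ₂) :
    ∃ z, z ≠ 0 ∧ upoly c a z = 0 ∧ Real.log ‖z‖ < σ₁ + (1 + Real.log n) := by
  set d := 1 + Real.log n
  have hd : 0 < d := by
    have := Real.log_nonneg (by exact_mod_cast Nat.one_le_iff_ne_zero.2 hn : (1 : ℝ) ≤ n)
    positivity
  obtain ⟨v, hv⟩ : ∃ v, v = σ₁ + d / 2 := ⟨_, rfl⟩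
  set x := Real.exp (-(d / 2))
  have hterm : ∀ i, tropTerm1 c a v i ≤ tropTerm1 c a v m * x ^ (a i - a m).natAbs := by
    intro i
    have hpos := (tropTerm1_pos (a := a) hc v m).le
    rw [← Real.exp_nat_mul, Nat.cast_natAbs, Int.cast_abs, Int.cast_sub]
    rcases le_or_gt (a i) (a m) with hle | hlt
    · refine (tropTerm1_le_mul_exp (h₁ i) v).trans (mul_le_mul_of_nonneg_left ?_ hpos)
      rw [Real.exp_le_exp, abs_of_nonpos (sub_nonpos.2 (by exact_mod_cast hle)), hv,
        add_sub_cancel_left]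
      linarith
    · refine (tropTerm1_le_mul_exp (h₂ i) v).trans (mul_le_mul_of_nonneg_left ?_ hpos)
      have hlt' : (a m : ℝ) < a i := by exact_mod_cast hlt
      rw [Real.exp_le_exp, abs_of_pos (sub_pos.2 hlt')]
      exact mul_le_mul_of_nonneg_left (by linarith) (sub_pos.2 hlt').le
  have hx₀ : 0 ≤ x := (Real.exp_pos _).le
  have hx₁ : x ≤ 1 := Real.exp_le_one_iff.2 (by linarith)
  have hnx : (n : ℝ) * x ^ 2 = Real.exp (-1) := by
    rw [← Real.exp_nat_mul, ← natCast_mul_exp_neg_one_add_log hn]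
    congr 2
    push_cast
    ring
  have hsum := sum_pow_natAbs_sub_le (s := univ.erase m) (ha.injective.injOn) (k := a m)
    (fun i hi => ha.injective.ne (ne_of_mem_erase hi)) hx₀ hx₁
  rw [card_erase_of_mem (mem_univ _), card_univ, Fintype.card_fin, add_tsub_cancel_right, hnx]
    at hsum
  obtain ⟨z, hz, hroot, hzv⟩ := exists_root_of_dominant hc ha hm (v := v) <| by
    calc ∑ i ∈ univ.erase m, tropTerm1 c a v i
        ≤ tropTerm1 c a v m * ∑ i ∈ univ.erase m, x ^ (a i - a m).natAbs := by
          rw [mul_sum]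
          exact sum_le_sum fun i _ => hterm i
      _ < tropTerm1 c a v m := by
          refine mul_lt_of_lt_one_right (tropTerm1_pos hc v m) (hsum.trans_lt ?_)
          nlinarith [Real.exp_neg_one_lt_half, sq_nonneg (x - 1 / 2)]
  exact ⟨z, hz, hroot, hzv.trans (by linarith)⟩

theorem exists_root_near_min (hc : ∀ i, c i ≠ 0) (ha : StrictMono a) {σ₁ σ₂ : ℝ}
    (hlt : σ₁ < σ₂) (hA : ArchTrop1 c a = {σ₁, σ₂}) :
    ∃ ζ, ζ ≠ 0 ∧ upoly c a ζ = 0 ∧ |σ₁ - Real.log ‖ζ‖| ≤ 1 + Real.log n := by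
  have hn : n ≠ 0 := by
    rintro rfl
    obtain ⟨i, k, hik, -⟩ : σ₁ ∈ ArchTrop1 c a := by simp [hA]
    exact hik (Fin.ext (by omega))
  have hlower : σ₁ ∈ lowerBounds (ArchTrop1 c a) := by
    rw [hA]; rintro u (rfl | rfl) <;> linarith
  have hupper : σ₂ ∈ upperBounds (ArchTrop1 c a) := by
    rw [hA]; rintro u (rfl | rfl) <;> linarith
  have hfar : ∀ ζ, ζ ≠ 0 → upoly c a ζ = 0 → σ₁ - (1 + Real.log n) < Real.log ‖ζ‖ :=
    fun ζ => sub_lt_log_norm_of_isTropMax_zero hc ha hn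
      (isTropMax_zero_of_mem_lowerBounds hc ha hlower)
  suffices ∃ ζ, ζ ≠ 0 ∧ upoly c a ζ = 0 ∧ Real.log ‖ζ‖ ≤ σ₁ + (1 + Real.log n) by
    obtain ⟨ζ, hζ, hroot, hle⟩ := this
    exact ⟨ζ, hζ, hroot, abs_le.2 ⟨by linarith, by linarith [hfar ζ hζ hroot]⟩⟩
  rcases le_or_gt σ₂ (σ₁ + (1 + Real.log n)) with hclose | hgap
  · obtain ⟨ζ, hζ, hroot, hle⟩ := exists_root_log_norm_le hc ha hn
      (isTropMax_last_of_mem_upperBounds hc ha hupper 0)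
    exact ⟨ζ, hζ, hroot, hle.trans hclose⟩
  · obtain ⟨m, hm, hm₁, hm₂⟩ := exists_isTropMax_of_archTrop1_eq_pair hc ha hlt hA
    obtain ⟨ζ, hζ, hroot, hlt⟩ := exists_root_log_norm_lt_of_isTropMax hc ha hn hm hm₁ hm₂ hgap
    exact ⟨ζ, hζ, hroot, hlt.le⟩

theorem exists_root_near_max (hc : ∀ i, c i ≠ 0) (ha : StrictMono a) {σ₁ σ₂ : ℝ}
    (hlt : σ₁ < σ₂) (hA : ArchTrop1 c a = {σ₁, σ₂}) :
    ∃ ζ, ζ ≠ 0 ∧ upoly c a ζ = 0 ∧ |σ₂ - Real.log ‖ζ‖| ≤ 1 + Real.log n := by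
  have hA' : ArchTrop1 (fun i => c i.rev) (fun i => -a i.rev) = {-σ₂, -σ₁} := by
    ext v
    rw [mem_archTrop1_rev, hA]
    simp only [Set.mem_insert_iff, Set.mem_singleton_iff, neg_eq_iff_eq_neg, or_comm]
  obtain ⟨ζ, hζ, hroot, hle⟩ :=
    exists_root_near_min (fun i => hc _) (strictMono_neg_comp_rev ha) (neg_lt_neg hlt) hA'
  refine ⟨ζ⁻¹, inv_ne_zero hζ, by rwa [← upoly_rev], ?_⟩
  rw [norm_inv, Real.log_inv, ← abs_neg]
  convert hle using 2
  ring

end Roots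

/-- If `ArchTrop(f)` has exactly 2 points, then every `σ ∈ ArchTrop(f)` is within distance
`1 + log(t-1)` of `log|ζ|` for some nonzero root `ζ` of `f`. -/
theorem stmt11 {t : ℕ}
    (c : Fin t → ℂ) (a : Fin t → ℤ) (ha : StrictMono a) (hc : ∀ i, c i ≠ 0)
    (hcard : (ArchTrop1 c a).ncard = 2) :
    ∀ σ ∈ ArchTrop1 c a, ∃ ζ : ℂ, ζ ≠ 0 ∧ upoly c a ζ = 0 ∧
      |σ - Real.log ‖ζ‖| ≤ 1 + Real.log ((t : ℝ) - 1) := by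
  intro σ hσ
  obtain ⟨i, -⟩ := id hσ
  obtain ⟨n, rfl⟩ := Nat.exists_eq_add_one.2 i.pos
  rw [Nat.cast_add_one, add_sub_cancel_right]
  obtain ⟨σ₁, σ₂, hlt, hA⟩ : ∃ σ₁ σ₂, σ₁ < σ₂ ∧ ArchTrop1 c a = {σ₁, σ₂} := by
    obtain ⟨x, y, hxy, hA⟩ := Set.ncard_eq_two.1 hcard
    rcases hxy.lt_or_gt with h | h
    · exact ⟨x, y, h, hA⟩
    · exact ⟨y, x, h, hA.trans (Set.pair_comm x y)⟩
  rw [hA] at hσ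
  rcases hσ with rfl | rfl
  · exact exists_root_near_min hc ha hlt hA
  · exact exists_root_near_max hc ha hlt hA
end

section
/- Assume t ≥ 2 and that ArchTrop(f) has exactly ℓ elements. Then for every σ ∈ ArchTrop(f) there exists a root ζ ∈ ℂ∖{0} of f with |σ − log|ζ|| ≤ (2ℓ − 1)·log(t−1). -/
open Complex Function Metric Polynomial Set

section Rouche

open scoped Classical

theorem circleIntegral_sub_inv_eq_ite {c w : ℂ} {r : ℝ} (hr : 0 < r) (hw : w ∉ sphere c r) :
    (∮ z in C(c, r), (z - w)⁻¹) = if w ∈ ball c r then 2 * Real.pi * I else 0 := by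
  split_ifs with hwb
  · exact circleIntegral.integral_sub_inv_of_mem_ball hwb
  · have hw' : w ∉ closedBall c r := by rw [← ball_union_sphere]; exact fun h => h.elim hwb hw
    refine DiffContOnCl.circleIntegral_eq_zero hr.le (DifferentiableOn.diffContOnCl ?_)
    rw [closure_ball c hr.ne']
    exact (differentiableOn_id.sub_const w).inv fun z hz =>
      sub_ne_zero.2 (ne_of_mem_of_not_mem hz hw')

theorem circleIntegral_multiset_sum_sub_inv {c : ℂ} {r : ℝ} (hr : 0 < r) (M : Multiset ℂ)
    (hM : ∀ w ∈ M, w ∉ sphere c r) :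
    (∮ z in C(c, r), (M.map fun w => (z - w)⁻¹).sum)
      = 2 * Real.pi * I * (M.filter (· ∈ ball c r)).card := by
  induction M using Multiset.induction_on with
  | empty => simp [circleIntegral]
  | cons w M ih =>
    have hw := hM w (Multiset.mem_cons_self w M)
    have hM' : ∀ u ∈ M, u ∉ sphere c r := fun u hu => hM u (Multiset.mem_cons_of_mem hu)
    have hint : CircleIntegrable (fun z => (M.map fun u => (z - u)⁻¹).sum) c r :=
      ContinuousOn.circleIntegrable hr.le <| continuousOn_multiset_sum M fun u hu =>
        (continuousOn_id.sub continuousOn_const).inv₀ fun z hz => sub_ne_zero.2 <| by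
          rintro rfl; exact hM' _ hu hz
    simp only [Multiset.map_cons, Multiset.sum_cons]
    rw [circleIntegral.integral_add
      (circleIntegrable_sub_inv_iff.2 (Or.inr (by rwa [abs_of_pos hr]))) hint,
      circleIntegral_sub_inv_eq_ite hr hw, ih hM', Multiset.filter_cons]
    split_ifs <;> simp [mul_add, add_comm]

namespace Polynomial

theorem circleIntegral_eval_derivative_div_eval {c : ℂ} {r : ℝ} (hr : 0 < r) (p : ℂ[X])
    (hp : ∀ z ∈ sphere c r, p.eval z ≠ 0) :
    (∮ z in C(c, r), p.derivative.eval z / p.eval z)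
      = 2 * Real.pi * I * (p.roots.filter (· ∈ ball c r)).card := by
  rw [circleIntegral.integral_congr hr.le fun z hz =>
    (IsAlgClosed.splits p).eval_derivative_div_eval_of_ne_zero (hp z hz)]
  simp only [one_div]
  exact circleIntegral_multiset_sum_sub_inv hr _ fun w hw hws =>
    hp w hws (isRoot_of_mem_roots hw)

/-- Rouché's theorem for polynomials. -/
theorem card_roots_filter_mem_ball_eq_of_norm_sub_lt {c : ℂ} {r : ℝ} (hr : 0 < r) {p q : ℂ[X]}
    (h : ∀ z ∈ sphere c r, ‖p.eval z - q.eval z‖ < ‖q.eval z‖) :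
    (p.roots.filter (· ∈ ball c r)).card = (q.roots.filter (· ∈ ball c r)).card := by
  have hq : ∀ z ∈ sphere c r, q.eval z ≠ 0 := fun z hz h0 =>
    (norm_nonneg _).not_gt (by simpa [h0] using h z hz)
  have hp : ∀ z ∈ sphere c r, p.eval z ≠ 0 := fun z hz h0 => by simpa [h0] using h z hz
  -- `p / q` stays in the disc `‖w - 1‖ < 1`, on which `log` is holomorphic
  have hlog : ∀ z ∈ sphere c r, HasDerivAt (fun z => log (p.eval z / q.eval z))
      (p.derivative.eval z / p.eval z - q.derivative.eval z / q.eval z) z := by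
    intro z hz
    have hslit : p.eval z / q.eval z ∈ slitPlane := by
      have := mem_slitPlane_of_norm_lt_one (z := (p.eval z - q.eval z) / q.eval z)
        (by rw [norm_div, div_lt_one (norm_pos_iff.2 (hq z hz))]; exact h z hz)
      rwa [sub_div, div_self (hq z hz), add_sub_cancel] at this
    convert ((p.hasDerivAt z).fun_div (q.hasDerivAt z) (hq z hz)).clog hslit using 1
    field_simp [hp z hz, hq z hz]
  have hint : ∀ s : ℂ[X], (∀ z ∈ sphere c r, s.eval z ≠ 0) →
      CircleIntegrable (fun z => s.derivative.eval z / s.eval z) c r := fun s hs =>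
    ContinuousOn.circleIntegrable hr.le
      (s.derivative.continuous.continuousOn.div s.continuous.continuousOn hs)
  have hzero := circleIntegral.integral_eq_zero_of_hasDerivWithinAt hr.le fun z hz =>
    (hlog z hz).hasDerivWithinAt
  rw [circleIntegral.integral_sub (hint p hp) (hint q hq), sub_eq_zero,
    circleIntegral_eval_derivative_div_eval hr p hp,
    circleIntegral_eval_derivative_div_eval hr q hq] at hzero
  exact_mod_cast mul_left_cancel₀ two_pi_I_ne_zero hzero

end Polynomial

theorem card_roots_filter_mem_ball_of_dominant_term {ι : Type*} [Fintype ι] {c : ι → ℂ}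
    {n : ι → ℕ} {r : ℝ} (hr : 0 < r) {i : ι}
    (h : ∑ j ∈ Finset.univ.erase i, ‖c j‖ * r ^ n j < ‖c i‖ * r ^ n i) :
    ((∑ j, C (c j) * X ^ n j).roots.filter (· ∈ ball 0 r)).card = n i := by
  have hci : c i ≠ 0 := by
    rintro h0
    rw [h0, norm_zero, zero_mul] at h
    exact h.not_ge (Finset.sum_nonneg fun j _ => by positivity)
  rw [card_roots_filter_mem_ball_eq_of_norm_sub_lt hr (q := C (c i) * X ^ n i),
    roots_C_mul_X_pow hci, Multiset.filter_eq_self.2, Multiset.card_nsmul,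
    Multiset.card_singleton, mul_one]
  · intro z hz
    rw [Multiset.mem_singleton.1 (Multiset.mem_nsmul.1 hz).2]
    exact mem_ball_self hr
  · intro z hz
    have hz' : ‖z‖ = r := by simpa using hz
    simp only [eval_finsetSum, eval_mul, eval_C, eval_pow, eval_X]
    rw [← Finset.add_sum_erase _ _ (Finset.mem_univ i), add_sub_cancel_left]
    calc ‖∑ j ∈ Finset.univ.erase i, c j * z ^ n j‖
        ≤ ∑ j ∈ Finset.univ.erase i, ‖c j * z ^ n j‖ := norm_sum_le _ _
      _ = ∑ j ∈ Finset.univ.erase i, ‖c j‖ * r ^ n j := by simp only [norm_mul, norm_pow, hz']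
      _ < ‖c i‖ * r ^ n i := h
      _ = ‖c i * z ^ n i‖ := by rw [norm_mul, norm_pow, hz']

end Rouche

theorem IsPreconnected.forall_lt_of_forall_exists_lt {X ι : Type*} [TopologicalSpace X] [Finite ι]
    {s : Set X} (hs : IsPreconnected s) {f : ι → X → ℝ} (hf : ∀ i, Continuous (f i))
    (h : ∀ x ∈ s, ∃ i, ∀ j ≠ i, f j x < f i x) {x₀ : X} (hx₀ : x₀ ∈ s) {i : ι}
    (hi : ∀ j ≠ i, f j x₀ < f i x₀) : ∀ x ∈ s, ∀ j ≠ i, f j x < f i x := by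
  let U : ι → Set X := fun k => {x | ∀ j ≠ k, f j x < f k x}
  have hU : ∀ k, IsOpen (U k) := fun k => by
    simp only [U, ofPred_forall]
    exact isOpen_iInter_of_finite fun j =>
      isOpen_iInter_of_finite fun _ => isOpen_lt (hf j) (hf k)
  have hdisj : Disjoint (U i) (⋃ (k) (_ : k ≠ i), U k) := by
    rw [Set.disjoint_left]
    intro x hxi hx
    obtain ⟨k, hk, hxk⟩ := mem_iUnion₂.1 hx
    exact (hxi k hk).not_gt (hxk i hk.symm)
  have hcover : s ⊆ U i ∪ ⋃ (k) (_ : k ≠ i), U k := fun x hx => by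
    obtain ⟨k, hk⟩ := h x hx
    by_cases hki : k = i
    · exact Or.inl (hki ▸ hk)
    · exact Or.inr (mem_biUnion hki hk)
  exact IsPreconnected.subset_left_of_subset_union (hU i)
    (isOpen_biUnion fun k _ => hU k) hdisj hcover ⟨x₀, hx₀, hi⟩ hs

section TropicalLocus

variable {ι : Type*} (b : ι → ℝ) (a : ι → ℤ)

/-- `ArchTrop(f)` in logarithmic coordinates, for `b i = log |c_i|`. -/
def tropicalLocus : Set ℝ :=
  {v | ∃ i k, i ≠ k ∧ (∀ l, b l + a l * v ≤ b i + a i * v) ∧ b i + a i * v = b k + a k * v}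

variable {b a}

theorem tropicalLocus_sub_const (m : ℤ) :
    tropicalLocus b (fun i => a i - m) = tropicalLocus b a := by
  ext v
  simp only [tropicalLocus, mem_ofPred_eq, Int.cast_sub, sub_mul, ← add_sub_assoc,
    sub_le_sub_iff_right, sub_left_inj]

theorem tropicalLocus_finite [Finite ι] (ha : Injective a) : (tropicalLocus b a).Finite := by
  refine (finite_iUnion fun p : ι × ι =>
    (?_ : {v | p.1 ≠ p.2 ∧ b p.1 + a p.1 * v = b p.2 + a p.2 * v}.Subsingleton).finite).subset ?_
  · rintro v ⟨hne, hv⟩ w ⟨-, hw⟩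
    have : (a p.1 : ℝ) - a p.2 ≠ 0 := sub_ne_zero.2 (by exact_mod_cast ha.ne hne)
    exact mul_left_cancel₀ this (by linarith)
  · rintro v ⟨i, k, hik, -, h⟩
    exact mem_iUnion.2 ⟨(i, k), hik, h⟩

theorem exists_forall_lt_of_notMem_tropicalLocus [Finite ι] [Nonempty ι] {v : ℝ}
    (hv : v ∉ tropicalLocus b a) : ∃ i, ∀ j ≠ i, b j + a j * v < b i + a i * v := by
  obtain ⟨i, hi⟩ := Finite.exists_max fun i => b i + a i * v
  exact ⟨i, fun j hj => (hi j).lt_of_ne fun h => hv ⟨i, j, hj.symm, hi, h.symm⟩⟩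

theorem exists_forall_le_sub_of_forall_le_abs_sub [Finite ι] [Nonempty ι] (ha : Injective a)
    {v ρ : ℝ} (hρ : 0 < ρ) (hgap : ∀ x ∈ tropicalLocus b a, ρ ≤ |x - v|) :
    ∃ i, ∀ j ≠ i, b j + a j * v ≤ b i + a i * v - ρ := by
  have hfree : ∀ w ∈ Ioo (v - ρ) (v + ρ), w ∉ tropicalLocus b a := fun w hw hw' =>
    (hgap w hw').not_gt (abs_sub_lt_iff.2 ⟨by linarith [hw.2], by linarith [hw.1]⟩)
  have hcont : ∀ i, Continuous fun w : ℝ => b i + a i * w := fun i => by fun_prop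
  have hv : v ∈ Ioo (v - ρ) (v + ρ) := ⟨by linarith, by linarith⟩
  obtain ⟨i, hi⟩ := exists_forall_lt_of_notMem_tropicalLocus (hfree v hv)
  have hdom := isPreconnected_Ioo.forall_lt_of_forall_exists_lt hcont
    (fun w hw => exists_forall_lt_of_notMem_tropicalLocus (hfree w hw)) hv hi
  refine ⟨i, fun j hj => ?_⟩
  have hle : Icc (v - ρ) (v + ρ) ⊆ {w | b j + a j * w ≤ b i + a i * w} := by
    rw [← closure_Ioo (by linarith)]
    exact closure_minimal (fun w hw => (hdom w hw j hj).le) (isClosed_le (hcont j) (hcont i))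
  have h₁ := hle ⟨le_rfl, by linarith⟩
  have h₂ := hle ⟨by linarith, le_rfl⟩
  simp only [mem_ofPred_eq] at h₁ h₂
  -- the margin `ρ` comes from the integer slopes differing by at least one
  rcases (ha.ne hj).lt_or_gt with h | h
  · have : (a j : ℝ) + 1 ≤ a i := by exact_mod_cast h
    nlinarith
  · have : (a i : ℝ) + 1 ≤ a j := by exact_mod_cast h
    nlinarith

theorem argmax_slope_le_of_lt {u w : ℝ} (huw : u < w) {i k : ι}
    (hi : ∀ l ≠ i, b l + a l * u ≤ b i + a i * u) (hk : ∀ l ≠ k, b l + a l * w ≤ b k + a k * w) :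
    a i ≤ a k := by
  rcases eq_or_ne k i with rfl | hki
  · exact le_rfl
  have h₁ := hi k hki
  have h₂ := hk i hki.symm
  have : (a i : ℝ) ≤ a k := by nlinarith
  exact_mod_cast this

theorem argmax_slope_lt_of_mem_tropicalLocus (ha : Injective a) {σ v₁ v₂ : ℝ}
    (hσ : σ ∈ tropicalLocus b a) (h₁ : v₁ < σ) (h₂ : σ < v₂) {i₁ i₂ : ι}
    (hi₁ : ∀ l ≠ i₁, b l + a l * v₁ ≤ b i₁ + a i₁ * v₁)
    (hi₂ : ∀ l ≠ i₂, b l + a l * v₂ ≤ b i₂ + a i₂ * v₂) :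
    a i₁ < a i₂ := by
  obtain ⟨p, q, hpq, hmax, heq⟩ := hσ
  have hp : ∀ l ≠ p, b l + a l * σ ≤ b p + a p * σ := fun l _ => hmax l
  have hq : ∀ l ≠ q, b l + a l * σ ≤ b q + a q * σ := fun l _ => heq ▸ hmax l
  rcases (ha.ne hpq).lt_or_gt with h | h
  · exact (argmax_slope_le_of_lt h₁ hi₁ hp).trans_lt
      (h.trans_le (argmax_slope_le_of_lt h₂ hq hi₂))
  · exact (argmax_slope_le_of_lt h₁ hi₁ hq).trans_lt
      (h.trans_le (argmax_slope_le_of_lt h₂ hp hi₂))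

end TropicalLocus

theorem exists_lt_forall_le_abs_sub {A : Set ℝ} (hA : A.Finite) {σ ρ : ℝ} (hσ : σ ∈ A)
    (hρ : 0 < ρ) : ∃ v < σ, σ - v ≤ (2 * A.ncard - 1) * ρ ∧ ∀ x ∈ A, ρ ≤ |x - v| := by
  classical
  -- the windows `(σ - (2j+2)ρ, σ - 2jρ)`, `j < #A`, are disjoint and miss `σ`,
  -- so one of them misses the other `#A - 1` points of `A`
  let idx : ℝ → ℕ := fun x => ⌊(σ - x) / (2 * ρ)⌋₊
  have hcard : ((hA.toFinset.erase σ).image idx).card < (Finset.range A.ncard).card := by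
    rw [Finset.card_range, ncard_eq_toFinset_card A hA]
    exact Finset.card_image_le.trans_lt (Finset.card_erase_lt_of_mem (hA.mem_toFinset.2 hσ))
  obtain ⟨j, hj, hjA⟩ := Finset.exists_mem_notMem_of_card_lt_card hcard
  refine ⟨σ - (2 * j + 1) * ρ, by nlinarith, ?_, fun x hx => not_lt.1 fun hxv => hjA ?_⟩
  · have : (j : ℝ) + 1 ≤ A.ncard := by exact_mod_cast Finset.mem_range.1 hj
    nlinarith
  · rw [abs_lt] at hxv
    have hidx : idx x = j := by
      rw [Nat.floor_eq_iff (div_nonneg (by nlinarith) (by positivity)),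
        le_div_iff₀ (by positivity), div_lt_iff₀ (by positivity)]
      constructor <;> nlinarith
    refine Finset.mem_image.2 ⟨x, Finset.mem_erase.2 ⟨?_, hA.mem_toFinset.2 hx⟩, hidx⟩
    rintro rfl
    nlinarith

open scoped Pointwise in
theorem exists_gt_forall_le_abs_sub {A : Set ℝ} (hA : A.Finite) {σ ρ : ℝ} (hσ : σ ∈ A)
    (hρ : 0 < ρ) : ∃ v > σ, v - σ ≤ (2 * A.ncard - 1) * ρ ∧ ∀ x ∈ A, ρ ≤ |x - v| := by
  obtain ⟨v, hv, hσv, hgap⟩ := exists_lt_forall_le_abs_sub hA.neg (neg_mem_neg.2 hσ) hρ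
  refine ⟨-v, by linarith, by rw [ncard_neg] at hσv; linarith, fun x hx => ?_⟩
  simpa [abs_sub_comm, add_comm] using hgap (-x) (by simpa using hx)

theorem Set.Finite.exists_le_of_forall_le_add {α : Type*} {S : Set α} (hS : S.Finite)
    {f : α → ℝ} {B : ℝ} (h : ∀ δ > 0, ∃ x ∈ S, f x ≤ B + δ) : ∃ x ∈ S, f x ≤ B := by
  by_contra! hlt
  obtain ⟨x₀, hx₀, hmin⟩ := S.exists_min_image f hS (let ⟨x, hx, _⟩ := h 1 one_pos; ⟨x, hx⟩)
  obtain ⟨x, hx, hfx⟩ := h ((f x₀ - B) / 2) (by linarith [hlt x₀ hx₀])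
  linarith [hmin x hx, hlt x₀ hx₀]

theorem Multiset.exists_mem_of_card_filter_lt {α : Type*} {s : Multiset α} {p q : α → Prop}
    [DecidablePred p] [DecidablePred q] (h : (s.filter p).card < (s.filter q).card) :
    ∃ x ∈ s, q x ∧ ¬p x := by
  by_contra! H
  refine h.not_ge (Multiset.card_le_card ?_)
  calc s.filter q = (s.filter q).filter p := (Multiset.filter_eq_self.2 fun x hx =>
        H x (Multiset.mem_of_mem_filter hx) (Multiset.of_mem_filter hx)).symm
    _ ≤ s.filter p := Multiset.filter_le_filter p (Multiset.filter_le q s)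

theorem sum_erase_exp_lt_exp {ι : Type*} [Fintype ι] [DecidableEq ι] {y : ι → ℝ} {i : ι}
    {ρ : ℝ} (hρ : Real.log (Fintype.card ι - 1) < ρ) (h : ∀ j ≠ i, y j ≤ y i - ρ) :
    ∑ j ∈ Finset.univ.erase i, Real.exp (y j) < Real.exp (y i) := by
  have hcast : ((Fintype.card ι - 1 : ℕ) : ℝ) = Fintype.card ι - 1 := by
    rw [Nat.cast_sub (Fintype.card_pos_iff.2 ⟨i⟩), Nat.cast_one]
  have hlt : (Fintype.card ι - 1 : ℝ) < Real.exp ρ := by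
    rcases le_or_gt (Fintype.card ι - 1 : ℝ) 0 with h0 | hpos
    · exact h0.trans_lt (Real.exp_pos ρ)
    · exact (Real.log_lt_iff_lt_exp hpos).1 hρ
  calc ∑ j ∈ Finset.univ.erase i, Real.exp (y j)
      ≤ ∑ j ∈ Finset.univ.erase i, Real.exp (y i - ρ) :=
        Finset.sum_le_sum fun j hj => Real.exp_le_exp.2 (h j (Finset.ne_of_mem_erase hj))
    _ = (Fintype.card ι - 1 : ℝ) * Real.exp (y i - ρ) := by
        rw [Finset.sum_const, Finset.card_erase_of_mem (Finset.mem_univ i), Finset.card_univ,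
          nsmul_eq_mul, hcast]
    _ < Real.exp ρ * Real.exp (y i - ρ) := mul_lt_mul_of_pos_right hlt (Real.exp_pos _)
    _ = Real.exp (y i) := by rw [← Real.exp_add, add_sub_cancel]

section RootCount

open scoped Classical

variable {ι : Type*} [Fintype ι] {c : ι → ℂ}

theorem card_roots_filter_mem_ball_exp_eq (hc : ∀ i, c i ≠ 0) (n : ι → ℕ) {v ρ : ℝ}
    (hρ : Real.log (Fintype.card ι - 1) < ρ) {i : ι}
    (hi : ∀ j ≠ i, Real.log ‖c j‖ + (n j : ℤ) * v ≤ Real.log ‖c i‖ + (n i : ℤ) * v - ρ) :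
    ((∑ j, C (c j) * X ^ n j).roots.filter (· ∈ ball 0 (Real.exp v))).card = n i := by
  have hnorm : ∀ j, ‖c j‖ * Real.exp v ^ n j = Real.exp (Real.log ‖c j‖ + (n j : ℤ) * v) :=
    fun j => by
      rw [Real.exp_add, Real.exp_log (norm_pos_iff.2 (hc j)), Int.cast_natCast, Real.exp_nat_mul]
  refine card_roots_filter_mem_ball_of_dominant_term (Real.exp_pos v) ?_
  simp only [hnorm]
  exact sum_erase_exp_lt_exp hρ hi

theorem exists_mem_roots_exp_le_norm_lt_exp (hc : ∀ i, c i ≠ 0) {n : ι → ℕ} (hn : Injective n)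
    {σ ρ v₁ v₂ : ℝ} (hσ : σ ∈ tropicalLocus (fun i => Real.log ‖c i‖) fun i => (n i : ℤ))
    (h₁ : v₁ < σ) (h₂ : σ < v₂) (hρ₀ : 0 < ρ) (hρ : Real.log (Fintype.card ι - 1) < ρ)
    (hgap₁ : ∀ x ∈ tropicalLocus (fun i => Real.log ‖c i‖) (fun i => (n i : ℤ)), ρ ≤ |x - v₁|)
    (hgap₂ : ∀ x ∈ tropicalLocus (fun i => Real.log ‖c i‖) (fun i => (n i : ℤ)), ρ ≤ |x - v₂|) :
    ∃ ζ ∈ (∑ i, C (c i) * X ^ n i).roots, Real.exp v₁ ≤ ‖ζ‖ ∧ ‖ζ‖ < Real.exp v₂ := by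
  have : Nonempty ι := let ⟨i, _⟩ := hσ; ⟨i⟩
  have hn' : Injective fun i => (n i : ℤ) := Nat.cast_injective.comp hn
  obtain ⟨i₁, hi₁⟩ := exists_forall_le_sub_of_forall_le_abs_sub hn' hρ₀ hgap₁
  obtain ⟨i₂, hi₂⟩ := exists_forall_le_sub_of_forall_le_abs_sub hn' hρ₀ hgap₂
  have hlt : n i₁ < n i₂ := by
    exact_mod_cast argmax_slope_lt_of_mem_tropicalLocus hn' hσ h₁ h₂
      (fun j hj => (hi₁ j hj).trans (sub_le_self _ hρ₀.le))
      (fun j hj => (hi₂ j hj).trans (sub_le_self _ hρ₀.le))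
  rw [← card_roots_filter_mem_ball_exp_eq hc n hρ hi₁,
    ← card_roots_filter_mem_ball_exp_eq hc n hρ hi₂] at hlt
  obtain ⟨ζ, hζ, hζ₂, hζ₁⟩ := Multiset.exists_mem_of_card_filter_lt hlt
  rw [mem_ball_zero_iff] at hζ₁ hζ₂
  exact ⟨ζ, hζ, not_lt.1 hζ₁, hζ₂⟩

end RootCount

theorem Polynomial.coeff_sum_C_mul_X_pow_of_injective {R ι : Type*} [Semiring R] [Fintype ι]
    {c : ι → R} {n : ι → ℕ} (hn : Injective n) (i : ι) :
    (∑ j, C (c j) * X ^ n j).coeff (n i) = c i := by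
  rw [finsetSum_coeff, Finset.sum_eq_single i] <;> simp +contextual [hn.eq_iff, eq_comm]

theorem exists_injective_natCast_eq_sub {ι : Type*} [Finite ι] [Nonempty ι] {a : ι → ℤ}
    (ha : Injective a) : ∃ m : ℤ, ∃ n : ι → ℕ, Injective n ∧ ∀ i, (n i : ℤ) = a i - m := by
  obtain ⟨i₀, hi₀⟩ := Finite.exists_min a
  have hn : ∀ i, ((a i - a i₀).toNat : ℤ) = a i - a i₀ := fun i =>
    Int.toNat_of_nonneg (sub_nonneg.2 (hi₀ i))
  refine ⟨a i₀, fun i => (a i - a i₀).toNat, fun i j hij => ha ?_, hn⟩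
  have := congrArg (fun k : ℕ => (k : ℤ)) hij
  simp only [hn] at this
  linarith

section Upoly

variable {t : ℕ} {c : Fin t → ℂ} {a : Fin t → ℤ}

theorem archTrop1_eq_tropicalLocus (hc : ∀ i, c i ≠ 0) :
    ArchTrop1 c a = tropicalLocus (fun i => Real.log ‖c i‖) a := by
  have h : ∀ v i, tropTerm1 c a v i = Real.exp (Real.log ‖c i‖ + a i * v) := fun v i => by
    rw [Real.exp_add, Real.exp_log (norm_pos_iff.2 (hc i)), tropTerm1]
  ext v
  simp only [ArchTrop1, tropicalLocus, h, Real.exp_le_exp, Real.exp_eq_exp, mem_ofPred_eq]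

theorem archTrop1_finite (hc : ∀ i, c i ≠ 0) (ha : Injective a) : (ArchTrop1 c a).Finite := by
  rw [archTrop1_eq_tropicalLocus hc]
  exact tropicalLocus_finite ha

theorem upoly_eq_zpow_mul_eval (c : Fin t → ℂ) {m : ℤ} {n : Fin t → ℕ}
    (hn : ∀ i, (n i : ℤ) = a i - m) {z : ℂ} (hz : z ≠ 0) :
    upoly c a z = z ^ m * (∑ i, C (c i) * X ^ n i).eval z := by
  simp only [upoly, eval_finsetSum, eval_mul, eval_C, eval_pow, eval_X, Finset.mul_sum]
  refine Finset.sum_congr rfl fun i _ => ?_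
  rw [← zpow_natCast, hn, zpow_sub₀ hz]
  field_simp

theorem finite_setOf_upoly_eq_zero [Nonempty (Fin t)] (hc : ∀ i, c i ≠ 0) (ha : Injective a) :
    {ζ : ℂ | ζ ≠ 0 ∧ upoly c a ζ = 0}.Finite := by
  obtain ⟨m, n, hn_inj, hn⟩ := exists_injective_natCast_eq_sub ha
  have hp : ∑ i, C (c i) * X ^ n i ≠ 0 := fun h => hc (Classical.arbitrary _) <| by
    rw [← coeff_sum_C_mul_X_pow_of_injective (c := c) hn_inj, h, coeff_zero]
  refine (∑ i, C (c i) * X ^ n i).roots.toFinset.finite_toSet.subset fun ζ ⟨hζ, hζ0⟩ => ?_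
  rw [upoly_eq_zpow_mul_eval c hn hζ, mul_eq_zero] at hζ0
  simpa [hp] using hζ0.resolve_left (zpow_ne_zero _ hζ)

theorem exists_upoly_eq_zero_log_norm_mem_Ico (hc : ∀ i, c i ≠ 0) (ha : Injective a)
    {σ ρ v₁ v₂ : ℝ} (hσ : σ ∈ ArchTrop1 c a) (h₁ : v₁ < σ) (h₂ : σ < v₂) (hρ₀ : 0 < ρ)
    (hρ : Real.log ((t : ℝ) - 1) < ρ) (hgap₁ : ∀ x ∈ ArchTrop1 c a, ρ ≤ |x - v₁|)
    (hgap₂ : ∀ x ∈ ArchTrop1 c a, ρ ≤ |x - v₂|) :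
    ∃ ζ : ℂ, ζ ≠ 0 ∧ upoly c a ζ = 0 ∧ Real.log ‖ζ‖ ∈ Ico v₁ v₂ := by
  have : Nonempty (Fin t) := let ⟨i, _⟩ := hσ; ⟨i⟩
  obtain ⟨m, n, hn_inj, hn⟩ := exists_injective_natCast_eq_sub ha
  have hA : ArchTrop1 c a = tropicalLocus (fun i => Real.log ‖c i‖) fun i => (n i : ℤ) := by
    simp only [hn, tropicalLocus_sub_const, archTrop1_eq_tropicalLocus hc]
  rw [hA] at hσ hgap₁ hgap₂
  obtain ⟨ζ, hζ, h₁ζ, hζ₂⟩ := exists_mem_roots_exp_le_norm_lt_exp hc hn_inj hσ h₁ h₂ hρ₀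
    (by rwa [Fintype.card_fin]) hgap₁ hgap₂
  have hζ0 : 0 < ‖ζ‖ := (Real.exp_pos v₁).trans_le h₁ζ
  refine ⟨ζ, norm_pos_iff.1 hζ0, ?_, (Real.le_log_iff_exp_le hζ0).2 h₁ζ,
    (Real.log_lt_iff_lt_exp hζ0).2 hζ₂⟩
  rw [upoly_eq_zpow_mul_eval c hn (norm_pos_iff.1 hζ0), (isRoot_of_mem_roots hζ).eq_zero,
    mul_zero]

theorem exists_upoly_eq_zero_abs_sub_log_norm_le (hc : ∀ i, c i ≠ 0) (ha : Injective a)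
    {σ ρ : ℝ} (hσ : σ ∈ ArchTrop1 c a) (hρ : Real.log ((t : ℝ) - 1) < ρ) :
    ∃ ζ : ℂ, ζ ≠ 0 ∧ upoly c a ζ = 0 ∧
      |σ - Real.log ‖ζ‖| ≤ (2 * (ArchTrop1 c a).ncard - 1) * ρ := by
  obtain ⟨i, k, hik, -⟩ := id hσ
  have ht : (2 : ℝ) ≤ t := by exact_mod_cast Fin.nontrivial_iff_two_le.1 ⟨i, k, hik⟩
  have hρ₀ : 0 < ρ := (Real.log_nonneg (by linarith)).trans_lt hρ
  obtain ⟨v₁, h₁, hσv₁, hgap₁⟩ := exists_lt_forall_le_abs_sub (archTrop1_finite hc ha) hσ hρ₀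
  obtain ⟨v₂, h₂, hv₂σ, hgap₂⟩ := exists_gt_forall_le_abs_sub (archTrop1_finite hc ha) hσ hρ₀
  obtain ⟨ζ, hζ0, hζ, h₁ζ, hζ₂⟩ :=
    exists_upoly_eq_zero_log_norm_mem_Ico hc ha hσ h₁ h₂ hρ₀ hρ hgap₁ hgap₂
  exact ⟨ζ, hζ0, hζ, abs_le.2 ⟨by linarith, by linarith⟩⟩

end Upoly

theorem stmt15_general {t : ℕ} (ℓ : ℕ)
    (c : Fin t → ℂ) (a : Fin t → ℤ) (ha : StrictMono a) (hc : ∀ i, c i ≠ 0)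
    (hcard : (ArchTrop1 c a).ncard = ℓ) :
    ∀ σ ∈ ArchTrop1 c a, ∃ ζ : ℂ, ζ ≠ 0 ∧ upoly c a ζ = 0 ∧
      |σ - Real.log ‖ζ‖| ≤ (2 * (ℓ : ℝ) - 1) * Real.log ((t : ℝ) - 1) := by
  intro σ hσ
  have : Nonempty (Fin t) := let ⟨i, _⟩ := hσ; ⟨i⟩
  have hℓ : (0 : ℝ) < 2 * ℓ - 1 := by
    have : (1 : ℝ) ≤ ℓ := by
      rw [← hcard]
      exact_mod_cast (ncard_pos (archTrop1_finite hc ha.injective)).2 ⟨σ, hσ⟩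
    linarith
  obtain ⟨ζ, ⟨hζ0, hζ⟩, hζσ⟩ :=
    (finite_setOf_upoly_eq_zero hc ha.injective).exists_le_of_forall_le_add
      (f := fun ζ => |σ - Real.log ‖ζ‖|) fun δ hδ => by
        obtain ⟨ζ, hζ0, hζ, hζσ⟩ := exists_upoly_eq_zero_abs_sub_log_norm_le hc ha.injective hσ
          (lt_add_of_pos_right _ (div_pos hδ hℓ))
        refine ⟨ζ, ⟨hζ0, hζ⟩, hζσ.trans_eq ?_⟩
        rw [hcard, mul_add, mul_div_cancel₀ _ hℓ.ne']
  exact ⟨ζ, hζ0, hζ, hζσ⟩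

/-- If `ArchTrop(f)` has exactly `ℓ` points, then every `σ ∈ ArchTrop(f)` is within distance
`(2ℓ-1)·log(t-1)` of `log|ζ|` for some nonzero root `ζ` of `f`. -/
theorem stmt15 {t : ℕ} (ht : 2 ≤ t) (ℓ : ℕ)
    (c : Fin t → ℂ) (a : Fin t → ℤ) (ha : StrictMono a) (hc : ∀ i, c i ≠ 0)
    (hcard : (ArchTrop1 c a).ncard = ℓ) :
    ∀ σ ∈ ArchTrop1 c a, ∃ ζ : ℂ, ζ ≠ 0 ∧ upoly c a ζ = 0 ∧
      |σ - Real.log ‖ζ‖| ≤ (2 * (ℓ : ℝ) - 1) * Real.log ((t : ℝ) - 1) :=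
  stmt15_general ℓ c a ha hc hcard
end
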